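/- arXiv:1503.08197 — 9 statements merged into one kernel-verified Lean document; each statement's English description precedes it below -/
import Mathlib

section
/- With notation as in the definition of U_m: if b > c, then the matrix u = [[0,0],[0,p^{-1}]] lies in U_m. Consequently, if χ(n(u)) = ψ(-D u₁₁ + u₂₂) with ψ a nontrivial additive character of Q_p trivial on Z_p, then b > c implies U_m ⊄ ker χ. -/
open scoped Matrix

/-- The matrix y = [[p^a, β],[0, p^b]]. -/
noncomputable def yMat (p a b : ℕ) [Fact p.Prime] (β : ℚ_[p]) : Matrix (Fin 2) (Fin 2) ℚ_[p] :=
  !![(p : ℚ_[p]) ^ a, β; 0, (p : ℚ_[p]) ^ b]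

/-- Membership in U_m: u is symmetric, u·y is integral, and the row vector
(γ₁,γ₂)·u·y lies in p^c ℤ_p ⊕ p^{min(b,c)} ℤ_p. -/
def memUm (p : ℕ) [Fact p.Prime] (a b c : ℕ) (β γ₁ γ₂ : ℚ_[p])
    (u : Matrix (Fin 2) (Fin 2) ℚ_[p]) : Prop :=
  u.IsSymm ∧ (∀ i j, ‖(u * yMat p a b β) i j‖ ≤ 1) ∧
  ‖γ₁ * (u * yMat p a b β) 0 0 + γ₂ * (u * yMat p a b β) 1 0‖ ≤ (p : ℝ) ^ (-(c : ℤ)) ∧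
  ‖γ₁ * (u * yMat p a b β) 0 1 + γ₂ * (u * yMat p a b β) 1 1‖ ≤ (p : ℝ) ^ (-(min b c : ℤ))

/-- χ(n(u)) = ψ(-D·u₁₁ + u₂₂). -/
noncomputable def chiUm (p : ℕ) [Fact p.Prime] (ψ : ℚ_[p] → ℂ) (D : ℚ_[p])
    (u : Matrix (Fin 2) (Fin 2) ℚ_[p]) : ℂ :=
  ψ (-D * u 0 0 + u 1 1)

/- STATEMENT 2: If b > c then u = [[0,0],[0,p⁻¹]] ∈ U_m; consequently with
χ(u) = ψ(-Du₁₁+u₂₂) (ψ an additive character trivial exactly on ℤ_p, D a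
unit), b > c implies U_m ⊄ ker χ. -/
theorem stmt2 {p : ℕ} [Fact p.Prime] (a b c : ℕ) (β γ₁ γ₂ D : ℚ_[p])
    (ψ : ℚ_[p] → ℂ)
    (hψ : ∀ x y, ψ (x + y) = ψ x * ψ y) (hψtriv : ∀ x, ψ x = 1 ↔ ‖x‖ ≤ 1)
    (hD : ‖D‖ = 1) (hac : c ≤ a) (hβ : ‖β‖ ≤ (p : ℝ) ^ (-(c : ℤ)))
    (hγ₁ : ‖γ₁‖ ≤ 1) (hγ₂ : ‖γ₂‖ ≤ 1) (hbc : c < b) :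
    memUm p a b c β γ₁ γ₂ !![0, 0; 0, ((p : ℚ_[p]))⁻¹] ∧
    ¬ (∀ u, memUm p a b c β γ₁ γ₂ u → chiUm p ψ D u = 1) := by
  have hp : p.Prime := Fact.out
  have hp1 : (1:ℝ) < p := by exact_mod_cast hp.one_lt
  have hpQ : ((p:ℚ_[p])) ≠ 0 := by exact_mod_cast hp.ne_zero
  obtain ⟨k, hk⟩ : ∃ k, b = k + 1 := ⟨b - 1, by omega⟩
  have hck : c ≤ k := by omega
  have key : (!![(0:ℚ_[p]), 0; 0, (p:ℚ_[p])⁻¹] * yMat p a b β)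
      = !![(0:ℚ_[p]), 0; 0, (p:ℚ_[p])^k] := by
    ext i j
    fin_cases i <;> fin_cases j <;>
      simp [yMat, Matrix.mul_apply, Fin.sum_univ_two, hk, pow_succ] <;>
      field_simp
  have hnormk : ‖(p:ℚ_[p])^k‖ = (p:ℝ)^(-(k:ℤ)) := by
    rw [norm_pow, Padic.norm_p, ← zpow_natCast]
    simp [zpow_neg, inv_zpow]
  have hle1 : ‖(p:ℚ_[p])^k‖ ≤ 1 := by
    rw [hnormk]
    exact zpow_le_one_of_nonpos₀ (le_of_lt hp1) (by omega)
  have hmem : memUm p a b c β γ₁ γ₂ !![0, 0; 0, ((p : ℚ_[p]))⁻¹] := by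
    refine ⟨?_, ?_, ?_, ?_⟩
    · ext i j; fin_cases i <;> fin_cases j <;> simp [Matrix.IsSymm, Matrix.transpose]
    · intro i j
      rw [key]
      fin_cases i <;> fin_cases j <;> simpa using hle1
    · rw [key]
      simp only [show ∀ x : ℚ_[p], (!![(0:ℚ_[p]),0;0,x]) 0 0 = 0 from fun x => rfl,
        show ∀ x : ℚ_[p], (!![(0:ℚ_[p]),0;0,x]) 1 0 = 0 from fun x => rfl]
      rw [mul_zero, mul_zero, add_zero, norm_zero]
      positivity
    · rw [key]
      simp only [show ∀ x : ℚ_[p], (!![(0:ℚ_[p]),0;0,x]) 0 1 = 0 from fun x => rfl,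
        show ∀ x : ℚ_[p], (!![(0:ℚ_[p]),0;0,x]) 1 1 = x from fun x => rfl]
      have : ‖γ₁ * 0 + γ₂ * (p:ℚ_[p])^k‖ ≤ ‖(p:ℚ_[p])^k‖ := by
        rw [mul_zero, zero_add, norm_mul]
        calc ‖γ₂‖ * ‖(p:ℚ_[p])^k‖ ≤ 1 * ‖(p:ℚ_[p])^k‖ :=
              mul_le_mul_of_nonneg_right hγ₂ (norm_nonneg _)
          _ = ‖(p:ℚ_[p])^k‖ := one_mul _
      refine this.trans ?_
      rw [hnormk]
      have hmin : ((b:ℤ) ⊓ (c:ℤ)) = (c:ℤ) := by omega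
      rw [hmin]
      exact zpow_le_zpow_right₀ (le_of_lt hp1) (by omega)
  refine ⟨hmem, fun h => ?_⟩
  have := h _ hmem
  rw [chiUm] at this
  simp only [show (!![(0:ℚ_[p]),0;0,(p:ℚ_[p])⁻¹]) 0 0 = 0 from rfl,
    show (!![(0:ℚ_[p]),0;0,(p:ℚ_[p])⁻¹]) 1 1 = (p:ℚ_[p])⁻¹ from rfl,
    mul_zero, zero_add] at this
  rw [hψtriv] at this
  rw [norm_inv, Padic.norm_p, inv_inv] at this
  linarith
end

section
/- With notation as in the definition of U_m and χ: if a ≥ 1, p | β, p | γ₁, and c ≥ b, then u = [[p^{-1},0],[0,0]] lies in U_m; hence U_m ⊄ ker χ since χ(u) = ψ(-D/p) ≠ 1 when D is a p-adic unit. Therefore, if U_m ⊆ ker χ and c ≥ b, then at least one of p^a, β, γ₁ is a p-adic unit (i.e., either a = 0, or p ∤ β, or p ∤ γ₁). -/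
open scoped Matrix

/-! The witness is `u = diag(p⁻¹, 0)`. Its conditions reduce to `p⁻¹ p^a`, `p⁻¹ β` and `p⁻¹ γ₁`
being integral (the last via `γ₁ (p⁻¹ x) = (p⁻¹ γ₁) x`), while `χ(u) = ψ(-D/p) ≠ 1` as
`‖D/p‖ = p > 1`. The converse is the contrapositive: since the norm on `ℚ_[p]` takes values in
`p^ℤ`, a non-unit integral element has norm at most `p⁻¹`. -/

namespace Padic

variable {p : ℕ} [Fact p.Prime]

theorem norm_p_inv : ‖(p : ℚ_[p])⁻¹‖ = p := by
  rw [norm_inv, norm_p, inv_inv]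

theorem norm_le_inv_p_of_lt_one {x : ℚ_[p]} (hx : ‖x‖ < 1) : ‖x‖ ≤ (p : ℝ)⁻¹ := by
  simpa using (norm_lt_pow_iff_norm_le_pow_sub_one x 0).mp (by simpa using hx)

theorem norm_p_inv_mul_le_one {x : ℚ_[p]} (hx : ‖x‖ ≤ (p : ℝ)⁻¹) :
    ‖(p : ℚ_[p])⁻¹ * x‖ ≤ 1 := by
  have hp : (0 : ℝ) < p := by exact_mod_cast (Fact.out : p.Prime).pos
  rw [norm_mul, norm_p_inv, ← mul_inv_cancel₀ hp.ne']
  gcongr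

theorem norm_p_pow_le {m n : ℕ} (h : m ≤ n) : ‖(p : ℚ_[p]) ^ n‖ ≤ (p : ℝ) ^ (-(m : ℤ)) := by
  rw [norm_p_pow]
  exact zpow_le_zpow_right₀ (by exact_mod_cast (Fact.out : p.Prime).one_le) (by omega)

end Padic

section

variable {p : ℕ} [Fact p.Prime]

theorem invP_mul_yMat (a b : ℕ) (β : ℚ_[p]) :
    !![(p : ℚ_[p])⁻¹, 0; 0, 0] * yMat p a b β =
      !![(p : ℚ_[p])⁻¹ * (p : ℚ_[p]) ^ a, (p : ℚ_[p])⁻¹ * β; 0, 0] := by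
  rw [yMat, Matrix.mul_fin_two]
  simp

theorem memUm_invP {a b c : ℕ} {β γ₁ : ℚ_[p]} (γ₂ : ℚ_[p]) (ha : 1 ≤ a) (hca : c ≤ a)
    (hβ : ‖β‖ ≤ (p : ℝ)⁻¹) (hβc : ‖β‖ ≤ (p : ℝ) ^ (-(c : ℤ))) (hγ₁ : ‖γ₁‖ ≤ (p : ℝ)⁻¹) :
    memUm p a b c β γ₁ γ₂ !![(p : ℚ_[p])⁻¹, 0; 0, 0] := by
  have hpa : ‖(p : ℚ_[p]) ^ a‖ ≤ (p : ℝ)⁻¹ := by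
    simpa using Padic.norm_p_pow_le (p := p) ha
  have hγ₁p := Padic.norm_p_inv_mul_le_one hγ₁
  have γ₁_mul_le (x : ℚ_[p]) : ‖γ₁ * ((p : ℚ_[p])⁻¹ * x) + γ₂ * 0‖ ≤ ‖x‖ := by
    rw [mul_zero, add_zero, mul_left_comm, ← mul_assoc, norm_mul]
    exact mul_le_of_le_one_left (norm_nonneg _) hγ₁p
  rw [memUm, invP_mul_yMat]
  simp only [Matrix.of_apply, Matrix.cons_val', Matrix.cons_val_zero, Matrix.cons_val_one,
    Matrix.cons_val_fin_one]
  refine ⟨?_, fun i j => ?_, (γ₁_mul_le _).trans (Padic.norm_p_pow_le hca),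
    ((γ₁_mul_le _).trans hβc).trans ?_⟩
  · ext i j
    fin_cases i <;> fin_cases j <;> rfl
  · fin_cases i <;> fin_cases j
    exacts [Padic.norm_p_inv_mul_le_one hpa, Padic.norm_p_inv_mul_le_one hβ, by simp, by simp]
  · exact zpow_le_zpow_right₀ (by exact_mod_cast (Fact.out : p.Prime).one_le) (by omega)

theorem chiUm_invP_ne_one {ψ : ℚ_[p] → ℂ} (hψ : ∀ x, ψ x = 1 → ‖x‖ ≤ 1) {D : ℚ_[p]}
    (hD : ‖D‖ = 1) : chiUm p ψ D !![(p : ℚ_[p])⁻¹, 0; 0, 0] ≠ 1 := by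
  intro h
  have := hψ _ h
  simp only [Matrix.of_apply, Matrix.cons_val', Matrix.cons_val_zero, Matrix.cons_val_fin_one,
    Matrix.cons_val_one, add_zero, norm_neg, norm_mul, hD, Padic.norm_p_inv, one_mul,
    Nat.cast_le_one] at this
  exact (Fact.out : p.Prime).one_lt.not_ge this

end

theorem stmt3_general {p : ℕ} [Fact p.Prime] (a b c : ℕ) (β γ₁ γ₂ D : ℚ_[p])
    (ψ : ℚ_[p] → ℂ)
    (hψtriv : ∀ x, ψ x = 1 ↔ ‖x‖ ≤ 1)
    (hD : ‖D‖ = 1) (hca : c ≤ a)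
    (hβc : ‖β‖ ≤ (p : ℝ) ^ (-(c : ℤ))) (hβint : ‖β‖ ≤ 1)
    (hγ₁ : ‖γ₁‖ ≤ 1) :
    ((1 ≤ a → ‖β‖ ≤ (p : ℝ)⁻¹ → ‖γ₁‖ ≤ (p : ℝ)⁻¹ →
      memUm p a b c β γ₁ γ₂ !![((p : ℚ_[p]))⁻¹, 0; 0, 0] ∧
      ¬ (∀ u, memUm p a b c β γ₁ γ₂ u → chiUm p ψ D u = 1))) ∧
    ((∀ u, memUm p a b c β γ₁ γ₂ u → chiUm p ψ D u = 1) →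
      a = 0 ∨ ‖β‖ = 1 ∨ ‖γ₁‖ = 1) := by
  have not_le_ker (ha : 1 ≤ a) (hβ : ‖β‖ ≤ (p : ℝ)⁻¹) (hγ : ‖γ₁‖ ≤ (p : ℝ)⁻¹) :
      memUm p a b c β γ₁ γ₂ !![((p : ℚ_[p]))⁻¹, 0; 0, 0] ∧
        ¬ (∀ u, memUm p a b c β γ₁ γ₂ u → chiUm p ψ D u = 1) :=
    have hmem := memUm_invP γ₂ ha hca hβ hβc hγ
    ⟨hmem, fun H => chiUm_invP_ne_one (fun x => (hψtriv x).mp) hD (H _ hmem)⟩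
  refine ⟨not_le_ker, fun H => ?_⟩
  by_contra! h
  obtain ⟨ha, hβ, hγ⟩ := h
  exact (not_le_ker (by omega) (Padic.norm_le_inv_p_of_lt_one (hβint.lt_of_ne hβ))
    (Padic.norm_le_inv_p_of_lt_one (hγ₁.lt_of_ne hγ))).2 H

theorem stmt3 {p : ℕ} [Fact p.Prime] (a b c : ℕ) (β γ₁ γ₂ D : ℚ_[p])
    (ψ : ℚ_[p] → ℂ)
    (hψ : ∀ x y, ψ (x + y) = ψ x * ψ y) (hψtriv : ∀ x, ψ x = 1 ↔ ‖x‖ ≤ 1)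
    (hD : ‖D‖ = 1) (hca : c ≤ a) (hbc : b ≤ c)
    (hβc : ‖β‖ ≤ (p : ℝ) ^ (-(c : ℤ))) (hβint : ‖β‖ ≤ 1)
    (hγ₁ : ‖γ₁‖ ≤ 1) (hγ₂ : ‖γ₂‖ ≤ 1) :
    ((1 ≤ a → ‖β‖ ≤ (p : ℝ)⁻¹ → ‖γ₁‖ ≤ (p : ℝ)⁻¹ →
      memUm p a b c β γ₁ γ₂ !![((p : ℚ_[p]))⁻¹, 0; 0, 0] ∧
      ¬ (∀ u, memUm p a b c β γ₁ γ₂ u → chiUm p ψ D u = 1))) ∧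
    ((∀ u, memUm p a b c β γ₁ γ₂ u → chiUm p ψ D u = 1) →
      a = 0 ∨ ‖β‖ = 1 ∨ ‖γ₁‖ = 1) :=
  stmt3_general a b c β γ₁ γ₂ D ψ hψtriv hD hca hβc hβint hγ₁
end

section
/- With notation as in the definition of U_m and χ: if a > c > b (all ≥ 0), with p^c | β, then u = [[p^{-1},0],[0,0]] ∈ U_m, hence U_m ⊄ ker χ. Therefore if U_m ⊆ ker χ and a ≥ c ≥ b, then a = c or b = c. -/
open scoped Matrix

/- STATEMENT 4: If a > c > b (with p^c ∣ β) then [[p⁻¹,0],[0,0]] ∈ U_m, so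
U_m ⊄ ker χ.  Hence, if a ≥ c ≥ b and U_m ⊆ ker χ, then a = c or b = c. -/
theorem stmt4 {p : ℕ} [Fact p.Prime] (a b c : ℕ) (β γ₁ γ₂ D : ℚ_[p])
    (ψ : ℚ_[p] → ℂ)
    (hψ : ∀ x y, ψ (x + y) = ψ x * ψ y) (hψtriv : ∀ x, ψ x = 1 ↔ ‖x‖ ≤ 1)
    (hD : ‖D‖ = 1) (hca : c ≤ a) (hbc : b ≤ c)
    (hβc : ‖β‖ ≤ (p : ℝ) ^ (-(c : ℤ)))
    (hγ₁ : ‖γ₁‖ ≤ 1) (hγ₂ : ‖γ₂‖ ≤ 1) :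
    ((c < a → b < c →
      memUm p a b c β γ₁ γ₂ !![((p : ℚ_[p]))⁻¹, 0; 0, 0] ∧
      ¬ (∀ u, memUm p a b c β γ₁ γ₂ u → chiUm p ψ D u = 1))) ∧
    ((∀ u, memUm p a b c β γ₁ γ₂ u → chiUm p ψ D u = 1) → a = c ∨ b = c) := by
  have hp : p.Prime := Fact.out
  have hp1 : (1:ℝ) < p := by exact_mod_cast hp.one_lt
  have hp0 : (0:ℝ) < p := lt_trans one_pos hp1
  have hne : (p:ℝ) ≠ 0 := ne_of_gt hp0
  have hprod : (!![((p : ℚ_[p]))⁻¹, 0; 0, 0] * yMat p a b β) =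
      !![((p:ℚ_[p]))⁻¹ * (p:ℚ_[p])^a, ((p:ℚ_[p]))⁻¹ * β; 0, 0] := by
    ext i j
    fin_cases i <;> fin_cases j <;>
      simp [yMat, Matrix.mul_apply, Fin.sum_univ_two]
  have hninv : ‖((p:ℚ_[p]))⁻¹‖ = (p:ℝ)^(1:ℤ) := by
    rw [norm_inv, Padic.norm_p, inv_inv, zpow_one]
  have e00 : ‖((p:ℚ_[p]))⁻¹ * (p:ℚ_[p])^a‖ = (p:ℝ)^((1:ℤ)-a) := by
    rw [norm_mul, hninv, Padic.norm_p_pow, ← zpow_add₀ hne]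
    ring_nf
  have e01 : ‖((p:ℚ_[p]))⁻¹ * β‖ ≤ (p:ℝ)^((1:ℤ)-c) := by
    calc ‖((p:ℚ_[p]))⁻¹ * β‖ = ‖((p:ℚ_[p]))⁻¹‖ * ‖β‖ := norm_mul _ _
      _ ≤ (p:ℝ)^(1:ℤ) * (p:ℝ)^(-(c:ℤ)) := by
          rw [hninv]; exact mul_le_mul_of_nonneg_left hβc (by positivity)
      _ = (p:ℝ)^((1:ℤ)-c) := by rw [← zpow_add₀ hne]; ring_nf
  have main : c < a → b < c →
      memUm p a b c β γ₁ γ₂ !![((p : ℚ_[p]))⁻¹, 0; 0, 0] ∧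
      ¬ (∀ u, memUm p a b c β γ₁ γ₂ u → chiUm p ψ D u = 1) := by
    intro hca' hbc'
    have hb1 : ‖((p:ℚ_[p]))⁻¹ * (p:ℚ_[p])^a‖ ≤ 1 := by
      rw [e00]
      calc (p:ℝ)^((1:ℤ)-a) ≤ (p:ℝ)^(0:ℤ) :=
          zpow_le_zpow_right₀ hp1.le (by omega)
        _ = 1 := zpow_zero _
    have hb2 : ‖((p:ℚ_[p]))⁻¹ * β‖ ≤ 1 := by
      calc ‖((p:ℚ_[p]))⁻¹ * β‖ ≤ (p:ℝ)^((1:ℤ)-c) := e01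
        _ ≤ (p:ℝ)^(0:ℤ) := zpow_le_zpow_right₀ hp1.le (by omega)
        _ = 1 := zpow_zero _
    have hmem : memUm p a b c β γ₁ γ₂ !![((p : ℚ_[p]))⁻¹, 0; 0, 0] := by
      refine ⟨?_, ?_, ?_, ?_⟩
      · unfold Matrix.IsSymm
        ext i j
        fin_cases i <;> fin_cases j <;> simp
      · intro i j
        rw [hprod]
        fin_cases i <;> fin_cases j
        · exact hb1
        · exact hb2
        · show ‖(0:ℚ_[p])‖ ≤ 1
          simp
        · show ‖(0:ℚ_[p])‖ ≤ 1
          simp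
      · rw [hprod]
        show ‖γ₁ * (((p:ℚ_[p]))⁻¹ * (p:ℚ_[p])^a) + γ₂ * 0‖ ≤ _
        rw [mul_zero, add_zero]
        calc ‖γ₁ * (((p:ℚ_[p]))⁻¹ * (p:ℚ_[p])^a)‖
            = ‖γ₁‖ * ‖((p:ℚ_[p]))⁻¹ * (p:ℚ_[p])^a‖ := norm_mul _ _
          _ ≤ 1 * (p:ℝ)^((1:ℤ)-a) := by
              rw [e00]; exact mul_le_mul_of_nonneg_right hγ₁ (by positivity)
          _ = (p:ℝ)^((1:ℤ)-a) := one_mul _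
          _ ≤ (p:ℝ)^(-(c:ℤ)) := zpow_le_zpow_right₀ hp1.le (by omega)
      · rw [hprod]
        show ‖γ₁ * (((p:ℚ_[p]))⁻¹ * β) + γ₂ * 0‖ ≤ _
        rw [mul_zero, add_zero]
        calc ‖γ₁ * (((p:ℚ_[p]))⁻¹ * β)‖
            = ‖γ₁‖ * ‖((p:ℚ_[p]))⁻¹ * β‖ := norm_mul _ _
          _ ≤ 1 * (p:ℝ)^((1:ℤ)-c) :=
              mul_le_mul hγ₁ e01 (norm_nonneg _) zero_le_one
          _ = (p:ℝ)^((1:ℤ)-c) := one_mul _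
          _ ≤ (p:ℝ)^(-(min b c:ℤ)) := by
              apply zpow_le_zpow_right₀ hp1.le
              have hmin : min b c = b := min_eq_left hbc
              omega
    refine ⟨hmem, fun h => ?_⟩
    have hval : ψ (-D * ((p:ℚ_[p]))⁻¹ + 0) = 1 := h _ hmem
    rw [add_zero, hψtriv] at hval
    have hnm : ‖-D * ((p:ℚ_[p]))⁻¹‖ = (p:ℝ) := by
      rw [norm_mul, norm_neg, hD, one_mul, hninv, zpow_one]
    rw [hnm] at hval
    exact absurd hval (not_le.mpr hp1)
  constructor
  · exact main
  · intro h
    by_contra hcon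
    push_neg at hcon
    obtain ⟨h1, h2⟩ := hcon
    exact (main (lt_of_le_of_ne hca (fun hh => h1 hh.symm))
      (lt_of_le_of_ne hbc h2)).2 h
end

section
/- Suppose b ≥ 1, a ≥ c ≥ 1, p ∤ γ₁, p ∤ γ₂, and set γ = γ₁ γ₂^{-1} ∈ Z_p^×. Then u₀ = p^{-b}[[-γ^{-1}, 1],[1, -γ]] lies in U_m, and χ(u₀) = ψ(-p^{-b} γ^{-1}(γ² - D)). Hence if U_m ⊆ ker χ, then γ² ≡ D (mod p^b); in particular, D must be a square modulo p^b. -/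
open scoped Matrix

/- STATEMENT 5: If b ≥ 1, a ≥ c ≥ b, p ∤ γ₁γ₂ and γ = γ₁γ₂⁻¹, then
u₀ = p^{-b}[[-γ⁻¹,1],[1,-γ]] ∈ U_m and χ(u₀) = ψ(-p^{-b}γ⁻¹(γ²-D)).
Hence U_m ⊆ ker χ forces γ² ≡ D (mod p^b); in particular D is a square
modulo p^b. -/
theorem stmt5 {p : ℕ} [Fact p.Prime] (hp2 : p ≠ 2) (a b c : ℕ)
    (β γ₁ γ₂ D : ℚ_[p]) (ψ : ℚ_[p] → ℂ)
    (hψ : ∀ x y, ψ (x + y) = ψ x * ψ y) (hψtriv : ∀ x, ψ x = 1 ↔ ‖x‖ ≤ 1)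
    (hD : ‖D‖ = 1) (hb : 1 ≤ b) (hbc : b ≤ c) (hca : c ≤ a)
    (hβ : ‖β‖ ≤ (p : ℝ) ^ (-(c : ℤ))) (hγ₁ : ‖γ₁‖ = 1) (hγ₂ : ‖γ₂‖ = 1) :
    memUm p a b c β γ₁ γ₂
      ((((p : ℚ_[p]) ^ b)⁻¹) • !![-(γ₁ * γ₂⁻¹)⁻¹, 1; 1, -(γ₁ * γ₂⁻¹)]) ∧
    chiUm p ψ D ((((p : ℚ_[p]) ^ b)⁻¹) • !![-(γ₁ * γ₂⁻¹)⁻¹, 1; 1, -(γ₁ * γ₂⁻¹)])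
      = ψ (-(((p : ℚ_[p]) ^ b)⁻¹ * (γ₁ * γ₂⁻¹)⁻¹ * ((γ₁ * γ₂⁻¹) ^ 2 - D))) ∧
    ((∀ u, memUm p a b c β γ₁ γ₂ u → chiUm p ψ D u = 1) →
      ‖(γ₁ * γ₂⁻¹) ^ 2 - D‖ ≤ (p : ℝ) ^ (-(b : ℤ)) ∧
      ∃ s : ℚ_[p], ‖s‖ ≤ 1 ∧ ‖s ^ 2 - D‖ ≤ (p : ℝ) ^ (-(b : ℤ))) := by
  have hple : (1:ℝ) < p := Nat.one_lt_cast.mpr (Fact.out (p := p.Prime)).one_lt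
  have hp0 : (0:ℝ) < p := lt_trans one_pos hple
  have hpne : (p:ℚ_[p]) ≠ 0 := Nat.cast_ne_zero.mpr (Fact.out (p := p.Prime)).ne_zero
  set γ : ℚ_[p] := γ₁ * γ₂⁻¹ with hγdef
  have hγ₂0 : γ₂ ≠ 0 := by intro h; simp [h] at hγ₂
  have hγ₁0 : γ₁ ≠ 0 := by intro h; simp [h] at hγ₁
  have hγ : ‖γ‖ = 1 := by rw [hγdef, norm_mul, norm_inv, hγ₁, hγ₂]; norm_num
  have hγ0 : γ ≠ 0 := by intro h; rw [h] at hγ; simp at hγ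
  have hpb : ((p:ℚ_[p])^b) ≠ 0 := pow_ne_zero _ hpne
  have hnpb : ‖((p:ℚ_[p])^b)⁻¹‖ = (p:ℝ)^(b:ℤ) := by
    rw [norm_inv, Padic.norm_p_pow, ← zpow_neg, neg_neg]
  have hna : ‖((p:ℚ_[p])^a)‖ = (p:ℝ)^(-(a:ℤ)) := Padic.norm_p_pow a
  have hzle : ∀ m n : ℤ, m ≤ n → (p:ℝ)^m ≤ (p:ℝ)^n := fun m n h =>
    zpow_le_zpow_right₀ hple.le h
  have hprod : ∀ m n : ℤ, (p:ℝ)^m * (p:ℝ)^n = (p:ℝ)^(m+n) := fun m n =>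
    (zpow_add₀ (ne_of_gt hp0) m n).symm
  have huy : ((((p : ℚ_[p]) ^ b)⁻¹) • !![-γ⁻¹, 1; 1, -γ]) * yMat p a b β
      = !![-(((p:ℚ_[p])^b)⁻¹ * γ⁻¹ * (p:ℚ_[p])^a), -(((p:ℚ_[p])^b)⁻¹ * γ⁻¹ * β) + 1;
           ((p:ℚ_[p])^b)⁻¹ * (p:ℚ_[p])^a, ((p:ℚ_[p])^b)⁻¹ * β - γ] := by
    rw [yMat, Matrix.smul_mul, Matrix.mul_fin_two]
    ext i j
    fin_cases i <;> fin_cases j <;>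
      simp [Matrix.smul_apply, smul_eq_mul] <;> field_simp <;> ring
  have hmem : memUm p a b c β γ₁ γ₂ ((((p : ℚ_[p]) ^ b)⁻¹) • !![-γ⁻¹, 1; 1, -γ]) := by
    refine ⟨?_, ?_, ?_, ?_⟩
    · rw [Matrix.IsSymm]
      ext i j
      fin_cases i <;> fin_cases j <;> simp [Matrix.transpose_apply]
    · intro i j
      rw [huy]
      fin_cases i <;> fin_cases j
      · show ‖-(((p:ℚ_[p])^b)⁻¹ * γ⁻¹ * (p:ℚ_[p])^a)‖ ≤ 1
        rw [norm_neg, mul_assoc, norm_mul, hnpb, norm_mul, norm_inv, hγ, hna, inv_one, one_mul,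
          hprod]
        calc (p:ℝ)^((b:ℤ) + -(a:ℤ)) ≤ (p:ℝ)^(0:ℤ) := hzle _ _ (by omega)
          _ = 1 := zpow_zero _
      · show ‖-(((p:ℚ_[p])^b)⁻¹ * γ⁻¹ * β) + 1‖ ≤ 1
        refine le_trans (Padic.nonarchimedean _ _) (max_le ?_ (by simp))
        rw [norm_neg, mul_assoc, norm_mul, hnpb, norm_mul, norm_inv, hγ, inv_one, one_mul]
        calc (p:ℝ)^(b:ℤ) * ‖β‖ ≤ (p:ℝ)^(b:ℤ) * (p:ℝ)^(-(c:ℤ)) := by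
              exact mul_le_mul_of_nonneg_left hβ (le_of_lt (zpow_pos hp0 _))
          _ = (p:ℝ)^((b:ℤ) + -(c:ℤ)) := hprod _ _
          _ ≤ (p:ℝ)^(0:ℤ) := hzle _ _ (by omega)
          _ = 1 := zpow_zero _
      · show ‖((p:ℚ_[p])^b)⁻¹ * (p:ℚ_[p])^a‖ ≤ 1
        rw [norm_mul, hnpb, hna, hprod]
        calc (p:ℝ)^((b:ℤ) + -(a:ℤ)) ≤ (p:ℝ)^(0:ℤ) := hzle _ _ (by omega)
          _ = 1 := zpow_zero _
      · show ‖((p:ℚ_[p])^b)⁻¹ * β - γ‖ ≤ 1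
        rw [sub_eq_add_neg]
        refine le_trans (Padic.nonarchimedean _ _) (max_le ?_ ?_)
        · rw [norm_mul, hnpb]
          calc (p:ℝ)^(b:ℤ) * ‖β‖ ≤ (p:ℝ)^(b:ℤ) * (p:ℝ)^(-(c:ℤ)) := by
                exact mul_le_mul_of_nonneg_left hβ (le_of_lt (zpow_pos hp0 _))
            _ = (p:ℝ)^((b:ℤ) + -(c:ℤ)) := hprod _ _
            _ ≤ (p:ℝ)^(0:ℤ) := hzle _ _ (by omega)
            _ = 1 := zpow_zero _
        · rw [norm_neg, hγ]
    · rw [huy]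
      have hz : γ₁ * (-(((p:ℚ_[p])^b)⁻¹ * γ⁻¹ * (p:ℚ_[p])^a)) +
          γ₂ * (((p:ℚ_[p])^b)⁻¹ * (p:ℚ_[p])^a) = 0 := by
        rw [hγdef]; field_simp; ring
      show ‖γ₁ * (-(((p:ℚ_[p])^b)⁻¹ * γ⁻¹ * (p:ℚ_[p])^a)) +
          γ₂ * (((p:ℚ_[p])^b)⁻¹ * (p:ℚ_[p])^a)‖ ≤ (p : ℝ) ^ (-(c : ℤ))
      rw [hz, norm_zero]
      positivity
    · rw [huy]
      have hz : γ₁ * (-(((p:ℚ_[p])^b)⁻¹ * γ⁻¹ * β) + 1) +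
          γ₂ * (((p:ℚ_[p])^b)⁻¹ * β - γ) = 0 := by
        rw [hγdef]; field_simp; ring
      show ‖γ₁ * (-(((p:ℚ_[p])^b)⁻¹ * γ⁻¹ * β) + 1) +
          γ₂ * (((p:ℚ_[p])^b)⁻¹ * β - γ)‖ ≤ (p : ℝ) ^ (-(min b c : ℤ))
      rw [hz, norm_zero]
      positivity
  have hchi : chiUm p ψ D ((((p : ℚ_[p]) ^ b)⁻¹) • !![-γ⁻¹, 1; 1, -γ])
      = ψ (-(((p:ℚ_[p])^b)⁻¹ * γ⁻¹ * (γ ^ 2 - D))) := by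
    rw [chiUm]
    congr 1
    show -D * (((p:ℚ_[p])^b)⁻¹ * -γ⁻¹) + ((p:ℚ_[p])^b)⁻¹ * -γ
        = -(((p:ℚ_[p])^b)⁻¹ * γ⁻¹ * (γ ^ 2 - D))
    field_simp
    ring
  refine ⟨hmem, hchi, ?_⟩
  intro h
  have h1 : ψ (-(((p:ℚ_[p])^b)⁻¹ * γ⁻¹ * (γ ^ 2 - D))) = 1 := by
    rw [← hchi]; exact h _ hmem
  have h2 : ‖-(((p:ℚ_[p])^b)⁻¹ * γ⁻¹ * (γ ^ 2 - D))‖ ≤ 1 := (hψtriv _).mp h1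
  rw [norm_neg, mul_assoc, norm_mul, hnpb, norm_mul, norm_inv, hγ, inv_one, one_mul] at h2
  have h3 : ‖γ ^ 2 - D‖ ≤ (p : ℝ) ^ (-(b : ℤ)) := by
    rw [zpow_neg, ← one_div, le_div_iff₀ (zpow_pos hp0 _)]
    calc ‖γ ^ 2 - D‖ * (p:ℝ)^(b:ℤ) = (p:ℝ)^(b:ℤ) * ‖γ ^ 2 - D‖ := mul_comm _ _
      _ ≤ 1 := h2
  exact ⟨h3, γ, le_of_eq hγ, h3⟩
end

section
/- Suppose b ≥ 1, a = c ≥ b, p ∤ γ₁γ₂, and γ = γ₁γ₂^{-1}. Then every u ∈ U_m is, modulo symmetric matrices in M_2(Z_p), of the form p^{-b} α [[-γ^{-1}, 1],[1, -γ]] for some α ∈ Z_p. Consequently U_m ⊆ ker χ if and only if γ² ≡ D (mod p^b). -/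
open scoped Matrix

/- STATEMENT 6: If b ≥ 1, a = c ≥ b, p ∤ γ₁γ₂ and γ = γ₁γ₂⁻¹, then every
u ∈ U_m is, modulo symmetric integral matrices, of the form
p^{-b} α [[-γ⁻¹,1],[1,-γ]] with α ∈ ℤ_p; consequently
U_m ⊆ ker χ ↔ γ² ≡ D (mod p^b). -/
set_option maxHeartbeats 2000000 in
theorem stmt6 {p : ℕ} [Fact p.Prime] (hp2 : p ≠ 2) (a b : ℕ)
    (β γ₁ γ₂ D : ℚ_[p]) (ψ : ℚ_[p] → ℂ)
    (hψ : ∀ x y, ψ (x + y) = ψ x * ψ y) (hψtriv : ∀ x, ψ x = 1 ↔ ‖x‖ ≤ 1)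
    (hD : ‖D‖ = 1) (hb : 1 ≤ b) (hba : b ≤ a)
    (hβ : ‖β‖ ≤ (p : ℝ) ^ (-(a : ℤ))) (hγ₁ : ‖γ₁‖ = 1) (hγ₂ : ‖γ₂‖ = 1) :
    (∀ u, memUm p a b a β γ₁ γ₂ u →
      ∃ (α : ℚ_[p]) (w : Matrix (Fin 2) (Fin 2) ℚ_[p]),
        ‖α‖ ≤ 1 ∧ w.IsSymm ∧ (∀ i j, ‖w i j‖ ≤ 1) ∧
        u = ((((p : ℚ_[p]) ^ b)⁻¹ * α) •
              !![-(γ₁ * γ₂⁻¹)⁻¹, 1; 1, -(γ₁ * γ₂⁻¹)]) + w) ∧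
    ((∀ u, memUm p a b a β γ₁ γ₂ u → chiUm p ψ D u = 1) ↔
      ‖(γ₁ * γ₂⁻¹) ^ 2 - D‖ ≤ (p : ℝ) ^ (-(b : ℤ))) := by
  have hprime : p.Prime := Fact.out
  have hp1 : (1:ℝ) < p := by exact_mod_cast hprime.one_lt
  have hpQ0 : (p:ℚ_[p]) ≠ 0 := Nat.cast_ne_zero.mpr hprime.ne_zero
  have hpbQ0 : ((p:ℚ_[p])^b) ≠ 0 := pow_ne_zero _ hpQ0
  have hγ₁0 : γ₁ ≠ 0 := fun h => by simp [h] at hγ₁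
  have hγ₂0 : γ₂ ≠ 0 := fun h => by simp [h] at hγ₂
  have hz : ∀ n:ℕ, ((p:ℝ)) ^ (-(n:ℤ)) = ((p:ℝ)^n)⁻¹ := fun n => by
    rw [zpow_neg, zpow_natCast]
  have hnp : ∀ n:ℕ, ‖((p:ℚ_[p])^n)‖ = ((p:ℝ)^n)⁻¹ := fun n => by
    rw [norm_pow, Padic.norm_p, inv_pow]
  have hPa : (0:ℝ) < (p:ℝ)^a := by positivity
  have hPb : (0:ℝ) < (p:ℝ)^b := by positivity
  have hPba : (p:ℝ)^b ≤ (p:ℝ)^a := pow_le_pow_right₀ hp1.le hba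
  have hγn : ‖γ₁ * γ₂⁻¹‖ = 1 := by
    rw [norm_mul, norm_inv, hγ₁, hγ₂]; norm_num
  have hγ0 : γ₁ * γ₂⁻¹ ≠ 0 := fun h => by simp [h] at hγn
  have hβ' : ‖β‖ ≤ ((p:ℝ)^a)⁻¹ := by rwa [hz] at hβ
  have hmul : ∀ (x c d : ℝ), 0 < c → x * c⁻¹ ≤ d → x ≤ d * c := fun x c d hc h => by
    have h2 := mul_le_mul_of_nonneg_right h hc.le
    rwa [mul_assoc, inv_mul_cancel₀ hc.ne', mul_one] at h2
  have key : ∀ u, memUm p a b a β γ₁ γ₂ u →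
      ∃ (α : ℚ_[p]) (w : Matrix (Fin 2) (Fin 2) ℚ_[p]),
        ‖α‖ ≤ 1 ∧ w.IsSymm ∧ (∀ i j, ‖w i j‖ ≤ 1) ∧
        u = ((((p : ℚ_[p]) ^ b)⁻¹ * α) •
              !![-(γ₁ * γ₂⁻¹)⁻¹, 1; 1, -(γ₁ * γ₂⁻¹)]) + w := by
    intro u hu
    obtain ⟨hsym, hint, hr0, hr1⟩ := hu
    have hsym' : u 1 0 = u 0 1 := by
      have := congrFun (congrFun hsym 0) 1
      simpa [Matrix.transpose_apply] using this
    have e00 : (u * yMat p a b β) 0 0 = u 0 0 * (p:ℚ_[p])^a := by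
      simp [yMat, Matrix.mul_apply, Fin.sum_univ_two]
    have e01 : (u * yMat p a b β) 0 1 = u 0 0 * β + u 0 1 * (p:ℚ_[p])^b := by
      simp [yMat, Matrix.mul_apply, Fin.sum_univ_two]
    have e10 : (u * yMat p a b β) 1 0 = u 1 0 * (p:ℚ_[p])^a := by
      simp [yMat, Matrix.mul_apply, Fin.sum_univ_two]
    have e11 : (u * yMat p a b β) 1 1 = u 1 0 * β + u 1 1 * (p:ℚ_[p])^b := by
      simp [yMat, Matrix.mul_apply, Fin.sum_univ_two]
    have h00 := hint 0 0
    rw [e00] at h00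
    have h01 := hint 0 1
    rw [e01] at h01
    -- ‖u 0 0‖ ≤ p^a
    have hu00 : ‖u 0 0‖ ≤ (p:ℝ)^a := by
      rw [norm_mul, hnp] at h00
      have := hmul _ _ _ hPa h00
      rwa [one_mul] at this
    -- hA : ‖γ₁ u00 + γ₂ u01‖ ≤ 1
    rw [e00, e10, hsym'] at hr0
    have hr0' : γ₁ * (u 0 0 * (p:ℚ_[p])^a) + γ₂ * (u 0 1 * (p:ℚ_[p])^a)
        = (γ₁ * u 0 0 + γ₂ * u 0 1) * (p:ℚ_[p])^a := by ring
    rw [hr0', norm_mul, hnp, hz] at hr0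
    have hA : ‖γ₁ * u 0 0 + γ₂ * u 0 1‖ ≤ 1 := by
      have := hmul _ _ _ hPa hr0
      rwa [inv_mul_cancel₀ hPa.ne'] at this
    -- ‖u00 * β‖ ≤ 1
    have hβu : ‖u 0 0 * β‖ ≤ 1 := by
      rw [norm_mul]
      calc ‖u 0 0‖ * ‖β‖ ≤ (p:ℝ)^a * ((p:ℝ)^a)⁻¹ :=
            mul_le_mul hu00 hβ' (norm_nonneg _) hPa.le
        _ = 1 := mul_inv_cancel₀ hPa.ne'
    -- ‖α‖ ≤ 1 where α := u 0 1 * p^b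
    have hα1 : ‖u 0 1 * (p:ℚ_[p])^b‖ ≤ 1 := by
      have h2 : u 0 1 * (p:ℚ_[p])^b
          = (u 0 0 * β + u 0 1 * (p:ℚ_[p])^b) + (-(u 0 0 * β)) := by ring
      rw [h2]
      exact le_trans (Padic.nonarchimedean _ _)
        (max_le h01 (by rwa [norm_neg]))
    -- hB : ‖γ₁ u01 + γ₂ u11‖ ≤ 1
    rw [e01, e11, hsym', min_eq_left (by exact_mod_cast hba : (b:ℤ) ≤ (a:ℤ)), hz] at hr1
    have hr1' : γ₁ * (u 0 0 * β + u 0 1 * (p:ℚ_[p])^b)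
          + γ₂ * (u 0 1 * β + u 1 1 * (p:ℚ_[p])^b)
        = (γ₁ * u 0 0 + γ₂ * u 0 1) * β
          + (γ₁ * u 0 1 + γ₂ * u 1 1) * (p:ℚ_[p])^b := by ring
    rw [hr1'] at hr1
    have ht : ‖(γ₁ * u 0 0 + γ₂ * u 0 1) * β‖ ≤ ((p:ℝ)^b)⁻¹ := by
      rw [norm_mul]
      calc ‖γ₁ * u 0 0 + γ₂ * u 0 1‖ * ‖β‖ ≤ 1 * ((p:ℝ)^a)⁻¹ :=
            mul_le_mul hA hβ' (norm_nonneg _) zero_le_one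
        _ = ((p:ℝ)^a)⁻¹ := one_mul _
        _ ≤ ((p:ℝ)^b)⁻¹ := inv_anti₀ hPb hPba
    have hBpb : ‖(γ₁ * u 0 1 + γ₂ * u 1 1) * (p:ℚ_[p])^b‖ ≤ ((p:ℝ)^b)⁻¹ := by
      have h2 : (γ₁ * u 0 1 + γ₂ * u 1 1) * (p:ℚ_[p])^b
          = ((γ₁ * u 0 0 + γ₂ * u 0 1) * β
              + (γ₁ * u 0 1 + γ₂ * u 1 1) * (p:ℚ_[p])^b)
            + (-((γ₁ * u 0 0 + γ₂ * u 0 1) * β)) := by ring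
      rw [h2]
      exact le_trans (Padic.nonarchimedean _ _)
        (max_le hr1 (by rwa [norm_neg]))
    have hB : ‖γ₁ * u 0 1 + γ₂ * u 1 1‖ ≤ 1 := by
      rw [norm_mul, hnp] at hBpb
      have := hmul _ _ _ hPb hBpb
      rwa [inv_mul_cancel₀ hPb.ne'] at this
    refine ⟨u 0 1 * (p:ℚ_[p])^b,
      !![γ₁⁻¹ * (γ₁ * u 0 0 + γ₂ * u 0 1), 0; 0, γ₂⁻¹ * (γ₁ * u 0 1 + γ₂ * u 1 1)],
      hα1, ?_, ?_, ?_⟩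
    · show Matrix.transpose _ = _
      ext i j
      fin_cases i <;> fin_cases j <;> simp
    · intro i j
      fin_cases i <;> fin_cases j <;> simp
      · rw [hγ₁]; simpa using hA
      · rw [hγ₂]; simpa using hB
    · ext i j
      fin_cases i <;> fin_cases j <;>
        simp [Matrix.add_apply, Matrix.smul_apply, smul_eq_mul] <;>
        try (field_simp; try ring)
      exact hsym'
  refine ⟨key, ?_, ?_⟩
  · intro hker
    have hmul2 : ∀ x c : ℝ, 0 < c → c * x ≤ 1 → x ≤ c⁻¹ := fun x c hc h => by
      have h2 := mul_le_mul_of_nonneg_left h (inv_nonneg.mpr hc.le)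
      rwa [← mul_assoc, inv_mul_cancel₀ hc.ne', one_mul, mul_one] at h2
    have h1n : ∀ n:ℕ, ((p:ℝ)^n)⁻¹ ≤ 1 := fun n => by
      have h1 : (1:ℝ) ≤ (p:ℝ)^n := one_le_pow₀ hp1.le
      have := inv_anti₀ one_pos h1
      simpa using this
    set u₀ : Matrix (Fin 2) (Fin 2) ℚ_[p] :=
      (((p:ℚ_[p])^b)⁻¹) • !![-(γ₁ * γ₂⁻¹)⁻¹, 1; 1, -(γ₁ * γ₂⁻¹)] with hu₀
    have hab : (p:ℚ_[p])^a = (p:ℚ_[p])^(a-b) * (p:ℚ_[p])^b := by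
      rw [← pow_add, Nat.sub_add_cancel hba]
    have hmulmat : u₀ * yMat p a b β =
        !![-(γ₁*γ₂⁻¹)⁻¹ * (p:ℚ_[p])^(a-b),
           -(γ₁*γ₂⁻¹)⁻¹ * (((p:ℚ_[p])^b)⁻¹ * β) + 1;
           (p:ℚ_[p])^(a-b),
           ((p:ℚ_[p])^b)⁻¹ * β + -(γ₁*γ₂⁻¹)] := by
      ext i j
      fin_cases i <;> fin_cases j <;>
        simp only [hu₀, yMat, Matrix.mul_apply, Fin.sum_univ_two, Matrix.smul_apply,
          smul_eq_mul, Matrix.of_apply, Fin.zero_eta, Fin.mk_one, Matrix.cons_val', Matrix.cons_val_zero, Matrix.cons_val_one,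
          Matrix.head_cons, Matrix.empty_val', Matrix.cons_val_fin_one, Matrix.head_fin_const]
      all_goals try rw [hab]
      all_goals field_simp
      all_goals try ring
    have hmem : memUm p a b a β γ₁ γ₂ u₀ := by
      have hpb1 : (p:ℝ)^b * ‖β‖ ≤ 1 :=
        calc (p:ℝ)^b * ‖β‖ ≤ (p:ℝ)^a * ((p:ℝ)^a)⁻¹ :=
              mul_le_mul hPba hβ' (norm_nonneg _) hPa.le
          _ = 1 := mul_inv_cancel₀ hPa.ne'
      refine ⟨?_, ?_, ?_, ?_⟩
      · show Matrix.transpose _ = _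
        ext i j
        fin_cases i <;> fin_cases j <;> simp [hu₀]
      · intro i j
        rw [hmulmat]
        fin_cases i <;> fin_cases j <;>
          simp only [Matrix.of_apply, Fin.zero_eta, Fin.mk_one, Matrix.cons_val', Matrix.cons_val_zero, Matrix.cons_val_one,
            Matrix.head_cons, Matrix.empty_val', Matrix.cons_val_fin_one, Matrix.head_fin_const]
        · rw [norm_mul, norm_neg, norm_inv, hγn, inv_one, one_mul, hnp]
          exact h1n _
        · refine le_trans (Padic.nonarchimedean _ _) (max_le ?_ norm_one.le)
          rw [norm_mul, norm_neg, norm_inv, hγn, inv_one, one_mul, norm_mul, norm_inv,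
            hnp, inv_inv]
          exact hpb1
        · rw [hnp]; exact h1n _
        · refine le_trans (Padic.nonarchimedean _ _) (max_le ?_ ?_)
          · rw [norm_mul, norm_inv, hnp, inv_inv]
            exact hpb1
          · rw [norm_neg, hγn]
      · have hrow : γ₁ * ((u₀ * yMat p a b β) 0 0) + γ₂ * ((u₀ * yMat p a b β) 1 0) = 0 := by
          rw [hmulmat]
          simp only [Matrix.of_apply, Fin.zero_eta, Fin.mk_one, Matrix.cons_val', Matrix.cons_val_zero, Matrix.cons_val_one,
            Matrix.head_cons, Matrix.empty_val', Matrix.cons_val_fin_one, Matrix.head_fin_const]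
          field_simp
          ring
        rw [hrow, norm_zero]
        positivity
      · have hrow : γ₁ * ((u₀ * yMat p a b β) 0 1) + γ₂ * ((u₀ * yMat p a b β) 1 1) = 0 := by
          rw [hmulmat]
          simp only [Matrix.of_apply, Fin.zero_eta, Fin.mk_one, Matrix.cons_val', Matrix.cons_val_zero, Matrix.cons_val_one,
            Matrix.head_cons, Matrix.empty_val', Matrix.cons_val_fin_one, Matrix.head_fin_const]
          field_simp
          ring
        rw [hrow, norm_zero]
        positivity
    have hchi := hker u₀ hmem
    unfold chiUm at hchi
    rw [hψtriv] at hchi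
    have hent : -D * u₀ 0 0 + u₀ 1 1
        = (((p:ℚ_[p])^b)⁻¹ * (γ₁*γ₂⁻¹)⁻¹) * (D - (γ₁*γ₂⁻¹)^2) := by
      simp only [hu₀, Matrix.smul_apply, smul_eq_mul, Matrix.of_apply, Fin.zero_eta, Fin.mk_one, Matrix.cons_val', Matrix.cons_val_zero,
        Matrix.cons_val_one, Matrix.head_cons, Matrix.empty_val', Matrix.cons_val_fin_one,
        Matrix.head_fin_const]
      field_simp
      ring
    rw [hent, norm_mul, norm_mul, norm_inv, norm_inv, hnp, inv_inv, hγn, inv_one, mul_one,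
      norm_sub_rev] at hchi
    rw [hz]
    exact hmul2 _ _ hPb hchi
  · intro hcong u hu
    obtain ⟨α, w, hα, hwsym, hwint, hue⟩ := key u hu
    rw [hz] at hcong
    unfold chiUm
    rw [hue, hψtriv]
    simp only [Matrix.add_apply, Matrix.smul_apply, smul_eq_mul, Matrix.of_apply, Matrix.cons_val',
      Matrix.cons_val_zero, Matrix.cons_val_one, Matrix.head_cons, Matrix.empty_val',
      Matrix.cons_val_fin_one, Matrix.head_fin_const]
    have heq : -D * (((p:ℚ_[p])^b)⁻¹ * α * -(γ₁*γ₂⁻¹)⁻¹ + w 0 0)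
          + (((p:ℚ_[p])^b)⁻¹ * α * -(γ₁*γ₂⁻¹) + w 1 1)
        = (((p:ℚ_[p])^b)⁻¹ * α * (γ₁*γ₂⁻¹)⁻¹) * (D - (γ₁*γ₂⁻¹)^2)
          + (-D * w 0 0 + w 1 1) := by
      field_simp
      ring
    rw [heq]
    refine le_trans (Padic.nonarchimedean _ _) (max_le ?_ ?_)
    · rw [norm_mul, norm_mul, norm_mul, norm_inv, norm_inv, hnp, inv_inv, hγn, inv_one,
        mul_one, norm_sub_rev]
      calc (p:ℝ)^b * ‖α‖ * ‖(γ₁*γ₂⁻¹)^2 - D‖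
          ≤ (p:ℝ)^b * 1 * ((p:ℝ)^b)⁻¹ :=
            mul_le_mul (mul_le_mul le_rfl hα (norm_nonneg _) hPb.le) hcong
              (norm_nonneg _) (by positivity)
        _ = 1 := by field_simp
    · refine le_trans (Padic.nonarchimedean _ _) (max_le ?_ ?_)
      · rw [norm_mul, norm_neg, hD, one_mul]
        exact hwint 0 0
      · exact hwint 1 1
end

section
/- Suppose a > c = b ≥ 1, p^c | β with β₀ = p^{-c}β. If p | β₀ then [[p^{-1},0],[0,0]] ∈ U_m, so U_m ⊆ ker χ forces p ∤ β₀. Moreover u = p^{b-a}[[1, -β₀],[-β₀, β₀²]] ∈ U_m with χ(u) = ψ((β₀² - D)/p^{a-b}), so U_m ⊆ ker χ forces β₀² ≡ D (mod p^{a-b}). -/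
open scoped Matrix

/- STATEMENT 7: a > c = b ≥ 1, β = p^b β₀.  If p ∣ β₀ then
[[p⁻¹,0],[0,0]] ∈ U_m, so U_m ⊆ ker χ forces p ∤ β₀.  Moreover
u = p^{b-a}[[1,-β₀],[-β₀,β₀²]] ∈ U_m with χ(u) = ψ((β₀²-D)/p^{a-b}), so
U_m ⊆ ker χ forces β₀² ≡ D (mod p^{a-b}). -/
theorem stmt7 {p : ℕ} [Fact p.Prime] (hp2 : p ≠ 2) (a b : ℕ)
    (β₀ γ₁ γ₂ D : ℚ_[p]) (ψ : ℚ_[p] → ℂ)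
    (hψ : ∀ x y, ψ (x + y) = ψ x * ψ y) (hψtriv : ∀ x, ψ x = 1 ↔ ‖x‖ ≤ 1)
    (hD : ‖D‖ = 1) (hb : 1 ≤ b) (hba : b < a)
    (hβ₀ : ‖β₀‖ ≤ 1) (hγ₁ : ‖γ₁‖ = 1) (hγ₂ : ‖γ₂‖ = 1) :
    ((‖β₀‖ ≤ (p : ℝ)⁻¹ →
      memUm p a b b ((p : ℚ_[p]) ^ b * β₀) γ₁ γ₂ !![((p : ℚ_[p]))⁻¹, 0; 0, 0])) ∧
    ((∀ u, memUm p a b b ((p : ℚ_[p]) ^ b * β₀) γ₁ γ₂ u → chiUm p ψ D u = 1) →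
      ‖β₀‖ = 1) ∧
    memUm p a b b ((p : ℚ_[p]) ^ b * β₀) γ₁ γ₂
      ((((p : ℚ_[p]) ^ (a - b))⁻¹) • !![1, -β₀; -β₀, β₀ ^ 2]) ∧
    chiUm p ψ D ((((p : ℚ_[p]) ^ (a - b))⁻¹) • !![1, -β₀; -β₀, β₀ ^ 2])
      = ψ ((β₀ ^ 2 - D) * ((p : ℚ_[p]) ^ (a - b))⁻¹) ∧
    ((∀ u, memUm p a b b ((p : ℚ_[p]) ^ b * β₀) γ₁ γ₂ u → chiUm p ψ D u = 1) →
      ‖β₀ ^ 2 - D‖ ≤ (p : ℝ) ^ (-((a : ℤ) - (b : ℤ)))) := by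
  have hp1 : (1:ℝ) < (p:ℝ) := by
    exact_mod_cast (Fact.out (p := p.Prime)).one_lt
  have hp0 : ((p:ℚ_[p])) ≠ 0 := Nat.cast_ne_zero.2 (Fact.out (p := p.Prime)).ne_zero
  have hpab0 : ((p:ℚ_[p])^(a-b)) ≠ 0 := pow_ne_zero _ hp0
  have hzmono : ∀ (k n : ℤ), n ≤ k → ((p:ℝ)^(-k) ≤ (p:ℝ)^(-n)) := fun k n h =>
    zpow_le_zpow_right₀ hp1.le (by omega)
  have hnorm_pow : ∀ n : ℕ, ‖((p:ℚ_[p])^n)‖ = (p:ℝ)^(-(n:ℤ)) := fun n =>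
    Padic.norm_p_pow n
  have hnonarch : ∀ x y : ℚ_[p], ‖x + y‖ ≤ max ‖x‖ ‖y‖ := Padic.nonarchimedean
  have hnorm_pinv : ‖((p:ℚ_[p])⁻¹)‖ = (p:ℝ) := by
    rw [norm_inv, Padic.norm_p, inv_inv]
  have hprod1 : (!![((p : ℚ_[p]))⁻¹, 0; 0, 0] * yMat p a b ((p:ℚ_[p])^b*β₀)) =
      !![(p:ℚ_[p])⁻¹ * (p:ℚ_[p])^a, (p:ℚ_[p])⁻¹ * ((p:ℚ_[p])^b*β₀); 0, 0] := by
    ext i j; fin_cases i <;> fin_cases j <;>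
      simp [yMat, Matrix.mul_apply, Fin.sum_univ_two]
  have hpa : (p:ℚ_[p])^a = (p:ℚ_[p])^(a-b) * (p:ℚ_[p])^b := by
    rw [← pow_add, Nat.sub_add_cancel hba.le]
  have hprod2 : ((((p : ℚ_[p]) ^ (a - b))⁻¹) • !![1, -β₀; -β₀, β₀ ^ 2] *
      yMat p a b ((p:ℚ_[p])^b*β₀)) = !![(p:ℚ_[p])^b, 0; -β₀ * (p:ℚ_[p])^b, 0] := by
    ext i j; fin_cases i <;> fin_cases j <;>
      simp [yMat, Matrix.mul_apply, Fin.sum_univ_two, hpa] <;> field_simp <;> ring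
  have hb0 : ‖((p:ℚ_[p])^b)‖ ≤ (p:ℝ)^(-(b:ℤ)) := le_of_eq (hnorm_pow b)
  have hble1 : (p:ℝ)^(-(b:ℤ)) ≤ 1 := by
    have := hzmono (b:ℤ) 0 (by exact_mod_cast Nat.zero_le b)
    simpa using this
  have hbpos : (0:ℝ) < (p:ℝ)^(-(b:ℤ)) := by positivity
  have hγ₁mul : ∀ x : ℚ_[p], ‖γ₁ * x‖ = ‖x‖ := fun x => by rw [norm_mul, hγ₁, one_mul]
  have hγ₂mul : ∀ x : ℚ_[p], ‖γ₂ * x‖ = ‖x‖ := fun x => by rw [norm_mul, hγ₂, one_mul]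
  have hβpb : ‖-β₀ * (p:ℚ_[p])^b‖ ≤ (p:ℝ)^(-(b:ℤ)) := by
    rw [norm_mul, norm_neg]
    calc ‖β₀‖ * ‖(p:ℚ_[p])^b‖ ≤ 1 * ((p:ℝ)^(-(b:ℤ))) :=
          mul_le_mul hβ₀ hb0 (norm_nonneg _) zero_le_one
      _ = (p:ℝ)^(-(b:ℤ)) := one_mul _
  -- part A
  have partA : ‖β₀‖ ≤ (p : ℝ)⁻¹ →
      memUm p a b b ((p : ℚ_[p]) ^ b * β₀) γ₁ γ₂ !![((p : ℚ_[p]))⁻¹, 0; 0, 0] := by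
    intro hsm
    have he00b : ‖(p:ℚ_[p])⁻¹ * (p:ℚ_[p])^a‖ ≤ (p:ℝ)^(-(b:ℤ)) := by
      rw [norm_mul, hnorm_pinv, hnorm_pow]
      calc (p:ℝ) * (p:ℝ)^(-(a:ℤ)) = (p:ℝ)^(-((a:ℤ)-1)) := by
            rw [show (-((a:ℤ)-1)) = 1 + -(a:ℤ) by ring, zpow_add₀ (by positivity), zpow_one]
        _ ≤ (p:ℝ)^(-(b:ℤ)) := hzmono _ _ (by omega)
    have he01 : ‖(p:ℚ_[p])⁻¹ * ((p:ℚ_[p])^b*β₀)‖ ≤ (p:ℝ)^(-(b:ℤ)) := by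
      rw [norm_mul, norm_mul, hnorm_pinv, hnorm_pow]
      calc (p:ℝ) * ((p:ℝ)^(-(b:ℤ)) * ‖β₀‖) ≤ (p:ℝ) * ((p:ℝ)^(-(b:ℤ)) * (p:ℝ)⁻¹) := by
            apply mul_le_mul_of_nonneg_left _ (by positivity)
            exact mul_le_mul_of_nonneg_left hsm (by positivity)
        _ = (p:ℝ)^(-(b:ℤ)) := by field_simp
    refine ⟨?_, ?_, ?_, ?_⟩
    · ext i j; fin_cases i <;> fin_cases j <;> simp [Matrix.IsSymm]
    · intro i j; rw [hprod1]; fin_cases i <;> fin_cases j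
      · exact (he00b.trans hble1)
      · exact (he01.trans hble1)
      · show ‖(0:ℚ_[p])‖ ≤ 1; simp
      · show ‖(0:ℚ_[p])‖ ≤ 1; simp
    · rw [hprod1]
      show ‖γ₁ * ((p:ℚ_[p])⁻¹ * (p:ℚ_[p])^a) + γ₂ * 0‖ ≤ (p:ℝ)^(-(b:ℤ))
      rw [mul_zero, add_zero, hγ₁mul]
      exact he00b
    · rw [hprod1, min_self]
      show ‖γ₁ * ((p:ℚ_[p])⁻¹ * ((p:ℚ_[p])^b*β₀)) + γ₂ * 0‖ ≤ (p:ℝ)^(-(b:ℤ))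
      rw [mul_zero, add_zero, hγ₁mul]
      exact he01
  -- memUm for the second matrix
  have hmem2 : memUm p a b b ((p : ℚ_[p]) ^ b * β₀) γ₁ γ₂
      ((((p : ℚ_[p]) ^ (a - b))⁻¹) • !![1, -β₀; -β₀, β₀ ^ 2]) := by
    refine ⟨?_, ?_, ?_, ?_⟩
    · rw [Matrix.IsSymm, Matrix.transpose_smul]
      congr 1
      ext i j; fin_cases i <;> fin_cases j <;> simp
    · intro i j; rw [hprod2]; fin_cases i <;> fin_cases j
      · exact hb0.trans hble1
      · show ‖(0:ℚ_[p])‖ ≤ 1; simp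
      · exact hβpb.trans hble1
      · show ‖(0:ℚ_[p])‖ ≤ 1; simp
    · rw [hprod2]
      show ‖γ₁ * ((p:ℚ_[p])^b) + γ₂ * (-β₀ * (p:ℚ_[p])^b)‖ ≤ (p:ℝ)^(-(b:ℤ))
      refine le_trans (hnonarch _ _) (max_le ?_ ?_)
      · rw [hγ₁mul]; exact hb0
      · rw [hγ₂mul]; exact hβpb
    · rw [hprod2, min_self]
      show ‖γ₁ * (0:ℚ_[p]) + γ₂ * 0‖ ≤ (p:ℝ)^(-(b:ℤ))
      rw [mul_zero, mul_zero, add_zero, norm_zero]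
      exact hbpos.le
  -- chi value for second matrix
  have hval : -D * ((((p : ℚ_[p]) ^ (a - b))⁻¹) • !![1, -β₀; -β₀, β₀ ^ 2]) 0 0 +
      ((((p : ℚ_[p]) ^ (a - b))⁻¹) • !![1, -β₀; -β₀, β₀ ^ 2]) 1 1 =
      (β₀ ^ 2 - D) * ((p : ℚ_[p]) ^ (a - b))⁻¹ := by
    show -D * (((p : ℚ_[p]) ^ (a - b))⁻¹ * 1) + ((p : ℚ_[p]) ^ (a - b))⁻¹ * β₀ ^ 2 = _
    ring
  refine ⟨partA, ?_, hmem2, ?_, ?_⟩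
  -- part B
  · intro h
    by_contra hne
    have hlt : ‖β₀‖ < 1 := lt_of_le_of_ne hβ₀ hne
    have hsm : ‖β₀‖ ≤ (p:ℝ)⁻¹ := by
      have := (Padic.norm_le_pow_iff_norm_lt_pow_add_one β₀ (-1)).2 (by simpa using hlt)
      simpa using this
    have hchi := h _ (partA hsm)
    rw [chiUm] at hchi
    have hv1 : -D * (!![((p : ℚ_[p]))⁻¹, 0; 0, 0]) 0 0 + (!![((p : ℚ_[p]))⁻¹, 0; 0, 0]) 1 1
        = -D * (p:ℚ_[p])⁻¹ := by
      show -D * (p:ℚ_[p])⁻¹ + 0 = _; ring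
    rw [hv1] at hchi
    have := (hψtriv _).1 hchi
    rw [norm_mul, norm_neg, hD, one_mul, hnorm_pinv] at this
    linarith
  -- part D
  · rw [chiUm, hval]
  -- part E
  · intro h
    have hchi := h _ hmem2
    rw [chiUm, hval] at hchi
    have hle := (hψtriv _).1 hchi
    rw [norm_mul, norm_inv, hnorm_pow] at hle
    have hcast : (-((a:ℤ) - (b:ℤ))) = -(((a-b : ℕ)):ℤ) := by
      rw [Nat.cast_sub hba.le]
    rw [hcast]
    have hpos : (0:ℝ) < (p:ℝ)^(-((a-b:ℕ):ℤ)) := by positivity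
    calc ‖β₀ ^ 2 - D‖ = ‖β₀ ^ 2 - D‖ * ((p:ℝ)^(-((a-b:ℕ):ℤ)))⁻¹ * (p:ℝ)^(-((a-b:ℕ):ℤ)) := by
          field_simp
      _ ≤ 1 * (p:ℝ)^(-((a-b:ℕ):ℤ)) := mul_le_mul_of_nonneg_right hle hpos.le
      _ = (p:ℝ)^(-((a-b:ℕ):ℤ)) := one_mul _
end

section
/- Suppose b = c = 0 in the matrix m = [[p^a, β, γ₁],[0,1,γ₂],[0,0,1]]. Then u ∈ U_m if and only if u is symmetric and uy ∈ M_2(Z_p), where y = [[p^a, β],[0,1]]. Moreover p^{-a}[[1, -β],[-β, β²]] ∈ U_m, and U_m ⊆ ker χ if and only if β² ≡ D (mod p^a). In particular, if D is not a square mod p (p inert case) and a ≥ 1, then U_m ⊄ ker χ. -/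
/-!
For symmetric `u` one has the identity
`-D u₀₀ + u₁₁ = (β² - D) p⁻ᵃ (uy)₀₀ + ((uy)₁₁ - β (uy)₀₁)`,
so on `U_m` (where `uy` is integral) the character `χ` is trivial exactly when
`p⁻ᵃ (β² - D)` is integral. The element `u = p⁻ᵃ [[1, -β], [-β, β²]]`, for which
`uy = [[1, 0], [-β, 0]]`, attains `χ(u) = ψ(p⁻ᵃ (β² - D))`, which gives the converse.
-/

open scoped Matrix

namespace Padic

variable {p : ℕ} [Fact p.Prime]

theorem norm_add_le_one {x y : ℚ_[p]} (hx : ‖x‖ ≤ 1) (hy : ‖y‖ ≤ 1) : ‖x + y‖ ≤ 1 :=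
  (IsUltrametricDist.norm_add_le_max x y).trans (max_le hx hy)

theorem norm_mul_le_one {x y : ℚ_[p]} (hx : ‖x‖ ≤ 1) (hy : ‖y‖ ≤ 1) : ‖x * y‖ ≤ 1 := by
  rw [norm_mul]
  exact mul_le_one₀ hx (norm_nonneg y) hy

theorem norm_inv_p_pow_mul_le_one_iff {a : ℕ} {x : ℚ_[p]} :
    ‖((p : ℚ_[p]) ^ a)⁻¹ * x‖ ≤ 1 ↔ ‖x‖ ≤ (p : ℝ) ^ (-(a : ℤ)) := by
  have hp : (0 : ℝ) < p := by exact_mod_cast (Fact.out : p.Prime).pos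
  rw [norm_mul, norm_inv, norm_p_pow, inv_mul_le_iff₀ (by positivity), mul_one]

end Padic

section

variable {p : ℕ} [Fact p.Prime] {a b : ℕ} {β : ℚ_[p]}

@[simp]
theorem mul_yMat_apply_zero_zero (u : Matrix (Fin 2) (Fin 2) ℚ_[p]) :
    (u * yMat p a b β) 0 0 = u 0 0 * (p : ℚ_[p]) ^ a := by
  simp [yMat, Matrix.mul_apply, Fin.sum_univ_two]

@[simp]
theorem mul_yMat_apply_zero_one (u : Matrix (Fin 2) (Fin 2) ℚ_[p]) :
    (u * yMat p a b β) 0 1 = u 0 0 * β + u 0 1 * (p : ℚ_[p]) ^ b := by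
  simp [yMat, Matrix.mul_apply, Fin.sum_univ_two]

@[simp]
theorem mul_yMat_apply_one_zero (u : Matrix (Fin 2) (Fin 2) ℚ_[p]) :
    (u * yMat p a b β) 1 0 = u 1 0 * (p : ℚ_[p]) ^ a := by
  simp [yMat, Matrix.mul_apply, Fin.sum_univ_two]

@[simp]
theorem mul_yMat_apply_one_one (u : Matrix (Fin 2) (Fin 2) ℚ_[p]) :
    (u * yMat p a b β) 1 1 = u 1 0 * β + u 1 1 * (p : ℚ_[p]) ^ b := by
  simp [yMat, Matrix.mul_apply, Fin.sum_univ_two]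

theorem memUm_zero_zero_iff {γ₁ γ₂ : ℚ_[p]} (hγ₁ : ‖γ₁‖ ≤ 1) (hγ₂ : ‖γ₂‖ ≤ 1)
    (u : Matrix (Fin 2) (Fin 2) ℚ_[p]) :
    memUm p a 0 0 β γ₁ γ₂ u ↔ u.IsSymm ∧ ∀ i j, ‖(u * yMat p a 0 β) i j‖ ≤ 1 := by
  refine ⟨fun ⟨hs, hi, _⟩ ↦ ⟨hs, hi⟩, fun ⟨hs, hi⟩ ↦ ⟨hs, hi, ?_, ?_⟩⟩ <;>
  · simp only [Nat.cast_zero, neg_zero, zpow_zero, min_self]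
    exact Padic.norm_add_le_one (Padic.norm_mul_le_one hγ₁ (hi _ _))
      (Padic.norm_mul_le_one hγ₂ (hi _ _))

theorem inv_p_pow_smul_mul_yMat (β : ℚ_[p]) :
    (((p : ℚ_[p]) ^ a)⁻¹ • !![1, -β; -β, β ^ 2]) * yMat p a 0 β = !![1, 0; -β, 0] := by
  have hpa : (p : ℚ_[p]) ^ a ≠ 0 := pow_ne_zero _ (Nat.cast_ne_zero.2 (Fact.out : p.Prime).ne_zero)
  ext i j
  fin_cases i <;> fin_cases j <;> simp <;> field_simp
  ring

theorem memUm_inv_p_pow_smul {γ₁ γ₂ : ℚ_[p]} (hβ : ‖β‖ ≤ 1) (hγ₁ : ‖γ₁‖ ≤ 1) (hγ₂ : ‖γ₂‖ ≤ 1) :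
    memUm p a 0 0 β γ₁ γ₂ (((p : ℚ_[p]) ^ a)⁻¹ • !![1, -β; -β, β ^ 2]) := by
  refine (memUm_zero_zero_iff hγ₁ hγ₂ _).2 ⟨?_, ?_⟩
  · ext i j
    fin_cases i <;> fin_cases j <;> simp
  · rw [inv_p_pow_smul_mul_yMat]
    intro i j
    fin_cases i <;> fin_cases j <;> simp [hβ]

theorem chiUm_eq_of_isSymm (ψ : ℚ_[p] → ℂ) (D : ℚ_[p]) {u : Matrix (Fin 2) (Fin 2) ℚ_[p]}
    (hu : u.IsSymm) :
    chiUm p ψ D u = ψ (((p : ℚ_[p]) ^ a)⁻¹ * (β ^ 2 - D) * (u * yMat p a 0 β) 0 0 +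
      ((u * yMat p a 0 β) 1 1 + -β * (u * yMat p a 0 β) 0 1)) := by
  have hpa : (p : ℚ_[p]) ^ a ≠ 0 := pow_ne_zero _ (Nat.cast_ne_zero.2 (Fact.out : p.Prime).ne_zero)
  rw [chiUm, mul_yMat_apply_zero_zero, mul_yMat_apply_one_one, mul_yMat_apply_zero_one,
    hu.apply 0 1]
  congr 1
  field_simp
  ring

theorem chiUm_inv_p_pow_smul (ψ : ℚ_[p] → ℂ) (D : ℚ_[p]) :
    chiUm p ψ D (((p : ℚ_[p]) ^ a)⁻¹ • !![1, -β; -β, β ^ 2]) =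
      ψ (((p : ℚ_[p]) ^ a)⁻¹ * (β ^ 2 - D)) := by
  rw [chiUm]
  congr 1
  simp only [Matrix.smul_apply, Matrix.of_apply, Matrix.cons_val', Matrix.cons_val_zero,
    Matrix.cons_val_one, Matrix.cons_val_fin_one, smul_eq_mul]
  ring

theorem forall_memUm_chiUm_eq_one_iff {γ₁ γ₂ D : ℚ_[p]} {ψ : ℚ_[p] → ℂ}
    (hψtriv : ∀ x, ψ x = 1 ↔ ‖x‖ ≤ 1) (hβ : ‖β‖ ≤ 1) (hγ₁ : ‖γ₁‖ ≤ 1) (hγ₂ : ‖γ₂‖ ≤ 1) :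
    (∀ u, memUm p a 0 0 β γ₁ γ₂ u → chiUm p ψ D u = 1) ↔
      ‖β ^ 2 - D‖ ≤ (p : ℝ) ^ (-(a : ℤ)) := by
  refine ⟨fun h ↦ ?_, fun hle u hu ↦ ?_⟩
  · have h₀ := h _ (memUm_inv_p_pow_smul hβ hγ₁ hγ₂)
    rwa [chiUm_inv_p_pow_smul, hψtriv, Padic.norm_inv_p_pow_mul_le_one_iff] at h₀
  · obtain ⟨hs, hi⟩ := (memUm_zero_zero_iff hγ₁ hγ₂ u).1 hu
    rw [chiUm_eq_of_isSymm ψ D hs, hψtriv]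
    have hβ' : ‖-β‖ ≤ 1 := by rwa [norm_neg]
    exact Padic.norm_add_le_one
      (Padic.norm_mul_le_one (Padic.norm_inv_p_pow_mul_le_one_iff.2 hle) (hi 0 0))
      (Padic.norm_add_le_one (hi 1 1) (Padic.norm_mul_le_one hβ' (hi 0 1)))

end

theorem stmt9_general {p : ℕ} [Fact p.Prime] (a : ℕ)
    (β γ₁ γ₂ D : ℚ_[p]) (ψ : ℚ_[p] → ℂ)
    (hψtriv : ∀ x, ψ x = 1 ↔ ‖x‖ ≤ 1)
    (hβ : ‖β‖ ≤ 1) (hγ₁ : ‖γ₁‖ ≤ 1) (hγ₂ : ‖γ₂‖ ≤ 1) :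
    (∀ u, memUm p a 0 0 β γ₁ γ₂ u ↔
      (u.IsSymm ∧ ∀ i j, ‖(u * yMat p a 0 β) i j‖ ≤ 1)) ∧
    memUm p a 0 0 β γ₁ γ₂ ((((p : ℚ_[p]) ^ a)⁻¹) • !![1, -β; -β, β ^ 2]) ∧
    ((∀ u, memUm p a 0 0 β γ₁ γ₂ u → chiUm p ψ D u = 1) ↔
      ‖β ^ 2 - D‖ ≤ (p : ℝ) ^ (-(a : ℤ))) ∧
    ((¬ ∃ s : ℚ_[p], ‖s‖ ≤ 1 ∧ ‖s ^ 2 - D‖ ≤ (p : ℝ)⁻¹) → 1 ≤ a →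
      ¬ (∀ u, memUm p a 0 0 β γ₁ γ₂ u → chiUm p ψ D u = 1)) := by
  have hχ := forall_memUm_chiUm_eq_one_iff (a := a) (D := D) hψtriv hβ hγ₁ hγ₂
  refine ⟨memUm_zero_zero_iff hγ₁ hγ₂, memUm_inv_p_pow_smul hβ hγ₁ hγ₂, hχ,
    fun hnsq ha hall ↦ hnsq ⟨β, hβ, (hχ.1 hall).trans ?_⟩⟩
  have hp : (1 : ℝ) ≤ p := by exact_mod_cast (Fact.out : p.Prime).one_lt.le
  simpa using zpow_le_zpow_right₀ hp (neg_le_neg (by exact_mod_cast ha : (1 : ℤ) ≤ a))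

theorem stmt9 {p : ℕ} [Fact p.Prime] (hp2 : p ≠ 2) (a : ℕ)
    (β γ₁ γ₂ D : ℚ_[p]) (ψ : ℚ_[p] → ℂ)
    (hψ : ∀ x y, ψ (x + y) = ψ x * ψ y) (hψtriv : ∀ x, ψ x = 1 ↔ ‖x‖ ≤ 1)
    (hD : ‖D‖ = 1) (hβ : ‖β‖ ≤ 1) (hγ₁ : ‖γ₁‖ ≤ 1) (hγ₂ : ‖γ₂‖ ≤ 1) :
    (∀ u, memUm p a 0 0 β γ₁ γ₂ u ↔
      (u.IsSymm ∧ ∀ i j, ‖(u * yMat p a 0 β) i j‖ ≤ 1)) ∧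
    memUm p a 0 0 β γ₁ γ₂ ((((p : ℚ_[p]) ^ a)⁻¹) • !![1, -β; -β, β ^ 2]) ∧
    ((∀ u, memUm p a 0 0 β γ₁ γ₂ u → chiUm p ψ D u = 1) ↔
      ‖β ^ 2 - D‖ ≤ (p : ℝ) ^ (-(a : ℤ))) ∧
    ((¬ ∃ s : ℚ_[p], ‖s‖ ≤ 1 ∧ ‖s ^ 2 - D‖ ≤ (p : ℝ)⁻¹) → 1 ≤ a →
      ¬ (∀ u, memUm p a 0 0 β γ₁ γ₂ u → chiUm p ψ D u = 1)) :=
  stmt9_general a β γ₁ γ₂ D ψ hψtriv hβ hγ₁ hγ₂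
end

section
/- Suppose b = 0, a = c > 0, p^a | β, and p ∤ γ₁, and m = [[p^a, β, γ₁],[0,1,0],[0,0,p^a]]. Then u ∈ U_m if and only if u is a symmetric matrix in M_2(Z_p). Hence U_m ⊆ ker χ. -/
open scoped Matrix

lemma entry0 (p a : ℕ) [Fact p.Prime] (β : ℚ_[p]) (u : Matrix (Fin 2) (Fin 2) ℚ_[p])
    (i : Fin 2) : (u * yMat p a 0 β) i 0 = u i 0 * (p:ℚ_[p])^a := by
  simp [yMat, Matrix.mul_apply, Fin.sum_univ_two]

lemma entry1 (p a : ℕ) [Fact p.Prime] (β : ℚ_[p]) (u : Matrix (Fin 2) (Fin 2) ℚ_[p])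
    (i : Fin 2) : (u * yMat p a 0 β) i 1 = u i 0 * β + u i 1 := by
  simp [yMat, Matrix.mul_apply, Fin.sum_univ_two]

lemma normSubMax {p : ℕ} [Fact p.Prime] (x y : ℚ_[p]) : ‖x - y‖ ≤ max ‖x‖ ‖y‖ := by
  simpa [sub_eq_add_neg] using Padic.nonarchimedean x (-y)


/- STATEMENT 11: b = 0, a = c > 0, p^a ∣ β, p ∤ γ₁.  Then u ∈ U_m iff u is a
symmetric matrix with entries in ℤ_p; hence U_m ⊆ ker χ. -/
theorem stmt11 {p : ℕ} [Fact p.Prime] (a : ℕ) (ha : 0 < a)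
    (β γ₁ D : ℚ_[p]) (ψ : ℚ_[p] → ℂ)
    (hψ : ∀ x y, ψ (x + y) = ψ x * ψ y) (hψtriv : ∀ x, ψ x = 1 ↔ ‖x‖ ≤ 1)
    (hD : ‖D‖ = 1) (hβ : ‖β‖ ≤ (p : ℝ) ^ (-(a : ℤ))) (hγ₁ : ‖γ₁‖ = 1) :
    (∀ u, memUm p a 0 a β γ₁ 0 u ↔ (u.IsSymm ∧ ∀ i j, ‖u i j‖ ≤ 1)) ∧
    (∀ u, memUm p a 0 a β γ₁ 0 u → chiUm p ψ D u = 1) := by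
  have hp1 : (1 : ℝ) < p := by exact_mod_cast (Fact.out (p := p.Prime)).one_lt
  have hp0 : (0 : ℝ) < p := lt_trans one_pos hp1
  have hpa : ‖((p:ℚ_[p]))^a‖ = (p : ℝ) ^ (-(a:ℤ)) := by
    rw [norm_pow, Padic.norm_p, inv_pow, ← zpow_natCast, ← zpow_neg]
  have hpale1 : (p : ℝ) ^ (-(a:ℤ)) ≤ 1 := by
    apply zpow_le_one_of_nonpos₀ (le_of_lt hp1); omega
  have hβ1 : ‖β‖ ≤ 1 := hβ.trans hpale1
  have hpapos : (0:ℝ) < (p : ℝ) ^ (-(a:ℤ)) := zpow_pos hp0 _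
  have key : ∀ u, memUm p a 0 a β γ₁ 0 u ↔ (u.IsSymm ∧ ∀ i j, ‖u i j‖ ≤ 1) := by
    intro u
    constructor
    · rintro ⟨hsym, hint, h3, _⟩
      refine ⟨hsym, ?_⟩
      rw [entry0, entry0] at h3
      have h00 : ‖u 0 0‖ ≤ 1 := by
        have he : ‖γ₁ * (u 0 0 * (p:ℚ_[p])^a) + 0 * (u 1 0 * (p:ℚ_[p])^a)‖
            = ‖u 0 0‖ * (p:ℝ)^(-(a:ℤ)) := by
          rw [zero_mul, add_zero, norm_mul, norm_mul, hγ₁, one_mul, hpa]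
        rw [he] at h3
        exact le_of_mul_le_mul_right (by linarith) hpapos
      have h01 : ‖u 0 1‖ ≤ 1 := by
        have hi := hint 0 1
        rw [entry1] at hi
        have hb : ‖u 0 0 * β‖ ≤ 1 := by
          rw [norm_mul]; exact mul_le_one₀ h00 (norm_nonneg _) hβ1
        calc ‖u 0 1‖ = ‖(u 0 0 * β + u 0 1) - u 0 0 * β‖ := by ring_nf
          _ ≤ max ‖u 0 0 * β + u 0 1‖ ‖u 0 0 * β‖ := normSubMax _ _
          _ ≤ 1 := max_le hi hb
      have h10 : ‖u 1 0‖ ≤ 1 := by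
        have := hsym.apply 0 1
        rw [this]; exact h01
      have h11 : ‖u 1 1‖ ≤ 1 := by
        have hi := hint 1 1
        rw [entry1] at hi
        have hb : ‖u 1 0 * β‖ ≤ 1 := by
          rw [norm_mul]; exact mul_le_one₀ h10 (norm_nonneg _) hβ1
        calc ‖u 1 1‖ = ‖(u 1 0 * β + u 1 1) - u 1 0 * β‖ := by ring_nf
          _ ≤ max ‖u 1 0 * β + u 1 1‖ ‖u 1 0 * β‖ := normSubMax _ _
          _ ≤ 1 := max_le hi hb
      intro i j
      fin_cases i <;> fin_cases j <;> assumption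
    · rintro ⟨hsym, hint⟩
      have col0 : ∀ i : Fin 2, ‖(u * yMat p a 0 β) i 0‖ ≤ (p:ℝ)^(-(a:ℤ)) := by
        intro i
        rw [entry0, norm_mul, hpa]
        exact mul_le_of_le_one_left (le_of_lt hpapos) (hint i 0)
      have col1 : ∀ i : Fin 2, ‖(u * yMat p a 0 β) i 1‖ ≤ 1 := by
        intro i
        rw [entry1]
        refine le_trans (Padic.nonarchimedean _ _) (max_le ?_ (hint i 1))
        rw [norm_mul]
        exact mul_le_one₀ (hint i 0) (norm_nonneg _) hβ1
      refine ⟨hsym, ?_, ?_, ?_⟩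
      · intro i j
        fin_cases j
        · exact le_trans (col0 _) hpale1
        · exact col1 _
      · simpa [hγ₁] using col0 0
      · simpa [hγ₁] using col1 0
  refine ⟨key, fun u hu => ?_⟩
  obtain ⟨-, hint⟩ := (key u).mp hu
  rw [chiUm, hψtriv]
  refine le_trans (Padic.nonarchimedean _ _) (max_le ?_ (hint 1 1))
  rw [norm_mul, norm_neg, hD, one_mul]
  exact hint 0 0
end

section
/- Let a > c = b ≥ 1, p odd, p ∤ 2D, β = p^c β₀ with p ∤ β₀, p ∤ γ₁γ₂, γ = γ₁γ₂^{-1}, and assume β₀² ≡ D (mod p^{a-b}), γ² ≡ D (mod p^b), and -β₀γ ≡ D (mod p^{min(a-b,b)}). In the case a - b ≥ b, a symmetric matrix u = [[u₁₁, -β₀u₁₁+u₁₂', -β₀u₁₁+u₁₂'],[·, β₀²u₁₁-(β₀+γ)u₁₂'+u₂₂']] (parametrized by u₁₁, u₁₂', u₂₂') lies in U_m if and only if u₁₁ ∈ p^{b-a}Z_p, u₁₂' ∈ p^{-b}Z_p, and u₂₂' ∈ Z_p; and for all such u, χ(u) = ψ((β₀²-D)u₁₁ - (β₀+γ)u₁₂')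 = 1. -/
open scoped Matrix

/-!
Multiplying out, `u·y = [[p^a u₁₁, p^b u₁₂'], [p^a (u₁₂' - β₀u₁₁), p^b (u₂₂' - γu₁₂')]]` and
`(γ₁, γ₂)·u·y = γ₂ (p^a ((γ - β₀)u₁₁ + u₁₂'), p^b u₂₂')`. Since `(β₀ - γ)β₀ ≡ 2D` modulo `p`,
`β₀ - γ` is a unit, so the first row condition bounds `u₁₁` by `p^(a-b)` once `u₁₂'` is bounded
by `p^b ≤ p^(a-b)`; all other conditions then hold automatically. In `χ(u)` the term `u₂₂' ∈ ℤ_p`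
splits off, and the rest is integral because `β₀² - D ∈ p^(a-b)ℤ_p` and `β₀ + γ ∈ p^b ℤ_p`.
-/

open IsUltrametricDist

section Ultrametric

variable {K : Type*} [NormedField K] [IsUltrametricDist K]

theorem norm_add_le_of_norm_sq_sub_le_of_norm_mul_add_le {β γ D : K} {r : ℝ} (hβ : ‖β‖ = 1)
    (hβD : ‖β ^ 2 - D‖ ≤ r) (hβγ : ‖β * γ + D‖ ≤ r) : ‖β + γ‖ ≤ r := by
  have h : ‖(β + γ) * β‖ ≤ r := by
    rw [show (β + γ) * β = (β ^ 2 - D) + (β * γ + D) by ring]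
    exact (norm_add_le_max _ _).trans (max_le hβD hβγ)
  rwa [norm_mul, hβ, mul_one] at h

theorem norm_sub_eq_one_of_norm_sq_sub_lt_of_norm_mul_add_lt {β γ D : K} (h2 : ‖(2 : K)‖ = 1)
    (hD : ‖D‖ = 1) (hβ : ‖β‖ = 1) (hβD : ‖β ^ 2 - D‖ < 1) (hβγ : ‖β * γ + D‖ < 1) :
    ‖β - γ‖ = 1 := by
  have h2D : ‖2 * D‖ = 1 := by rw [norm_mul, h2, hD, one_mul]
  have hsmall : ‖(β ^ 2 - D) - (β * γ + D)‖ < 1 := by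
    rw [sub_eq_add_neg]
    exact (norm_add_le_max _ _).trans_lt (max_lt hβD (by rwa [norm_neg]))
  have h : ‖(β - γ) * β‖ = 1 := by
    rw [show (β - γ) * β = 2 * D + ((β ^ 2 - D) - (β * γ + D)) by ring,
      norm_add_eq_max_of_norm_ne_norm (by rw [h2D]; exact hsmall.ne'), h2D]
    exact max_eq_left hsmall.le
  rwa [norm_mul, hβ, mul_one] at h

/-- With `r = p^b`, `s = p^(a-b)`, `t = p^a` the left side is the right side of
`memUm_uParam_iff`. -/
theorem norm_bounds_iff_of_norm_sub_eq_one {β γ u₁₁ u₁₂ u₂₂ : K} {r s t : ℝ}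
    (hβ : ‖β‖ ≤ 1) (hγ : ‖γ‖ ≤ 1) (hγβ : ‖γ - β‖ = 1) (hr : 1 ≤ r) (hrs : r ≤ s) (hst : s ≤ t) :
    (‖u₁₁‖ ≤ t ∧ ‖u₁₂‖ ≤ r ∧ ‖-β * u₁₁ + u₁₂‖ ≤ t ∧ ‖u₂₂ - γ * u₁₂‖ ≤ r ∧
      ‖(γ - β) * u₁₁ + u₁₂‖ ≤ s ∧ ‖u₂₂‖ ≤ 1) ↔
      ‖u₁₁‖ ≤ s ∧ ‖u₁₂‖ ≤ r ∧ ‖u₂₂‖ ≤ 1 := by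
  constructor
  · rintro ⟨-, h₁₂, -, -, hrow, h₂₂⟩
    refine ⟨?_, h₁₂, h₂₂⟩
    have h : ‖(γ - β) * u₁₁‖ ≤ s := by
      rw [show (γ - β) * u₁₁ = ((γ - β) * u₁₁ + u₁₂) + -u₁₂ by ring]
      exact (norm_add_le_max _ _).trans (max_le hrow (by rw [norm_neg]; exact h₁₂.trans hrs))
    rwa [norm_mul, hγβ, one_mul] at h
  · rintro ⟨h₁₁, h₁₂, h₂₂⟩
    have hscaled {x y : K} {R : ℝ} (hx : ‖x‖ ≤ 1) (hy : ‖y‖ ≤ R) : ‖x * y‖ ≤ R := by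
      rw [norm_mul]
      exact (mul_le_of_le_one_left (norm_nonneg _) hx).trans hy
    refine ⟨h₁₁.trans hst, h₁₂, ?_, ?_, ?_, h₂₂⟩
    · exact (norm_add_le_max _ _).trans
        (max_le (hscaled (by rwa [norm_neg]) (h₁₁.trans hst)) (h₁₂.trans (hrs.trans hst)))
    · rw [sub_eq_add_neg]
      exact (norm_add_le_max _ _).trans
        (max_le (h₂₂.trans hr) (by rw [norm_neg]; exact hscaled hγ h₁₂))
    · exact (norm_add_le_max _ _).trans (max_le (hscaled hγβ.le h₁₁) (h₁₂.trans hrs))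

end Ultrametric

namespace Padic

variable {p : ℕ} [Fact p.Prime]

theorem norm_two_eq_one (hp : p ≠ 2) : ‖(2 : ℚ_[p])‖ = 1 := by
  have h := norm_natCast_eq_one_iff (p := p) (n := 2)
  rw [Nat.cast_ofNat] at h
  exact h.mpr ((Nat.coprime_primes Fact.out Nat.prime_two).mpr hp)

theorem norm_p_pow_mul_le_zpow_iff (n : ℕ) (m : ℤ) (x : ℚ_[p]) :
    ‖(p : ℚ_[p]) ^ n * x‖ ≤ (p : ℝ) ^ m ↔ ‖x‖ ≤ (p : ℝ) ^ (m + n) := by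
  have hp : (0 : ℝ) < p := Nat.cast_pos.mpr (Fact.out : p.Prime).pos
  rw [norm_mul, norm_p_pow, mul_comm, ← le_div_iff₀ (zpow_pos hp _),
    ← zpow_sub₀ hp.ne', sub_neg_eq_add]

theorem norm_p_pow_mul_le_one_iff (n : ℕ) (x : ℚ_[p]) :
    ‖(p : ℚ_[p]) ^ n * x‖ ≤ 1 ↔ ‖x‖ ≤ (p : ℝ) ^ (n : ℤ) := by
  simpa using norm_p_pow_mul_le_zpow_iff n 0 x

theorem norm_mul_le_one_of_le_zpow {x y : ℚ_[p]} {k : ℤ} (hx : ‖x‖ ≤ (p : ℝ) ^ (-k))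
    (hy : ‖y‖ ≤ (p : ℝ) ^ k) : ‖x * y‖ ≤ 1 := by
  have hp : (0 : ℝ) < p := Nat.cast_pos.mpr (Fact.out : p.Prime).pos
  calc ‖x * y‖ ≤ (p : ℝ) ^ (-k) * (p : ℝ) ^ k := norm_mul_le_of_le hx hy
    _ = 1 := by rw [← zpow_add₀ hp.ne', neg_add_cancel, zpow_zero]

end Padic

/-- The matrix `u` in the coordinates `(u₁₁, u₁₂', u₂₂')` of the statement. -/
def uParam {R : Type*} [CommRing R] (β₀ γ u₁₁ u₁₂ u₂₂ : R) : Matrix (Fin 2) (Fin 2) R :=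
  !![u₁₁, -β₀ * u₁₁ + u₁₂; -β₀ * u₁₁ + u₁₂, β₀ ^ 2 * u₁₁ - (β₀ + γ) * u₁₂ + u₂₂]

section Um

variable {p : ℕ} [Fact p.Prime]

theorem uParam_mul_yMat (a b : ℕ) (β₀ γ u₁₁ u₁₂ u₂₂ : ℚ_[p]) :
    uParam β₀ γ u₁₁ u₁₂ u₂₂ * yMat p a b ((p : ℚ_[p]) ^ b * β₀) =
      !![(p : ℚ_[p]) ^ a * u₁₁, (p : ℚ_[p]) ^ b * u₁₂;
        (p : ℚ_[p]) ^ a * (-β₀ * u₁₁ + u₁₂), (p : ℚ_[p]) ^ b * (u₂₂ - γ * u₁₂)] := by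
  ext i j
  fin_cases i <;> fin_cases j <;>
    simp [uParam, yMat, Matrix.mul_apply, Fin.sum_univ_two] <;> ring

theorem memUm_uParam_iff {a b : ℕ} {β₀ γ₁ γ₂ u₁₁ u₁₂ u₂₂ : ℚ_[p]} (hγ₂ : ‖γ₂‖ = 1) :
    memUm p a b b ((p : ℚ_[p]) ^ b * β₀) γ₁ γ₂ (uParam β₀ (γ₁ * γ₂⁻¹) u₁₁ u₁₂ u₂₂) ↔
      ‖u₁₁‖ ≤ (p : ℝ) ^ (a : ℤ) ∧ ‖u₁₂‖ ≤ (p : ℝ) ^ (b : ℤ) ∧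
      ‖-β₀ * u₁₁ + u₁₂‖ ≤ (p : ℝ) ^ (a : ℤ) ∧ ‖u₂₂ - γ₁ * γ₂⁻¹ * u₁₂‖ ≤ (p : ℝ) ^ (b : ℤ) ∧
      ‖(γ₁ * γ₂⁻¹ - β₀) * u₁₁ + u₁₂‖ ≤ (p : ℝ) ^ ((a : ℤ) - b) ∧ ‖u₂₂‖ ≤ 1 := by
  have hγ₂₀ : γ₂ ≠ 0 := norm_ne_zero_iff.mp (hγ₂ ▸ one_ne_zero)
  have hγ₁ : γ₁ = γ₂ * (γ₁ * γ₂⁻¹) := by rw [mul_comm γ₁, mul_inv_cancel_left₀ hγ₂₀]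
  have hrow₁ : γ₁ * ((p : ℚ_[p]) ^ a * u₁₁) + γ₂ * ((p : ℚ_[p]) ^ a * (-β₀ * u₁₁ + u₁₂)) =
      γ₂ * ((p : ℚ_[p]) ^ a * ((γ₁ * γ₂⁻¹ - β₀) * u₁₁ + u₁₂)) := by
    nth_rw 1 [hγ₁]; ring
  have hrow₂ : γ₁ * ((p : ℚ_[p]) ^ b * u₁₂) + γ₂ * ((p : ℚ_[p]) ^ b * (u₂₂ - γ₁ * γ₂⁻¹ * u₁₂)) =
      γ₂ * ((p : ℚ_[p]) ^ b * u₂₂) := by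
    nth_rw 1 [hγ₁]; ring
  have hsymm : (uParam β₀ (γ₁ * γ₂⁻¹) u₁₁ u₁₂ u₂₂).IsSymm := by
    ext i j; fin_cases i <;> fin_cases j <;> rfl
  simp only [memUm, uParam_mul_yMat, Fin.forall_fin_two, Matrix.of_apply, Matrix.cons_val',
    Matrix.cons_val_zero, Matrix.cons_val_one, Matrix.empty_val', Matrix.cons_val_fin_one,
    hrow₁, hrow₂, norm_mul γ₂, hγ₂, one_mul, Padic.norm_p_pow_mul_le_one_iff,
    Padic.norm_p_pow_mul_le_zpow_iff, min_self, neg_add_eq_sub, sub_self, zpow_zero,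
    hsymm, true_and, and_assoc]

theorem chiUm_uParam (ψ : ℚ_[p] → ℂ) (hψ : ∀ x y, ψ (x + y) = ψ x * ψ y)
    {D β₀ γ u₁₁ u₁₂ u₂₂ : ℚ_[p]} (hu₂₂ : ψ u₂₂ = 1) :
    chiUm p ψ D (uParam β₀ γ u₁₁ u₁₂ u₂₂) = ψ ((β₀ ^ 2 - D) * u₁₁ - (β₀ + γ) * u₁₂) := by
  rw [chiUm, ← mul_one (ψ (_ - _)), ← hu₂₂, ← hψ]
  congr 1
  simp [uParam]
  ring

end Um

theorem stmt19_general {p : ℕ} [Fact p.Prime] (hp2 : p ≠ 2) (a b : ℕ)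
    (β₀ γ₁ γ₂ D : ℚ_[p]) (ψ : ℚ_[p] → ℂ)
    (hψ : ∀ x y, ψ (x + y) = ψ x * ψ y) (hψtriv : ∀ x, ψ x = 1 ↔ ‖x‖ ≤ 1)
    (hD : ‖D‖ = 1) (hb : 1 ≤ b) (hab : b ≤ a - b)
    (hβ₀ : ‖β₀‖ = 1) (hγ₁ : ‖γ₁‖ = 1) (hγ₂ : ‖γ₂‖ = 1)
    (hcong1 : ‖β₀ ^ 2 - D‖ ≤ (p : ℝ) ^ (-((a : ℤ) - (b : ℤ))))
    (hcong3 : ‖β₀ * (γ₁ * γ₂⁻¹) + D‖ ≤ (p : ℝ) ^ (-(min (a - b) b : ℤ))) :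
    ∀ u11 u12 u22 : ℚ_[p],
      (memUm p a b b ((p : ℚ_[p]) ^ b * β₀) γ₁ γ₂
        !![u11, -β₀ * u11 + u12;
           -β₀ * u11 + u12,
           β₀ ^ 2 * u11 - (β₀ + γ₁ * γ₂⁻¹) * u12 + u22] ↔
        (‖u11‖ ≤ (p : ℝ) ^ ((a : ℤ) - (b : ℤ)) ∧ ‖u12‖ ≤ (p : ℝ) ^ (b : ℤ) ∧
          ‖u22‖ ≤ 1)) ∧
      (memUm p a b b ((p : ℚ_[p]) ^ b * β₀) γ₁ γ₂
        !![u11, -β₀ * u11 + u12;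
           -β₀ * u11 + u12,
           β₀ ^ 2 * u11 - (β₀ + γ₁ * γ₂⁻¹) * u12 + u22] →
        chiUm p ψ D
          !![u11, -β₀ * u11 + u12;
             -β₀ * u11 + u12,
             β₀ ^ 2 * u11 - (β₀ + γ₁ * γ₂⁻¹) * u12 + u22]
          = ψ ((β₀ ^ 2 - D) * u11 - (β₀ + γ₁ * γ₂⁻¹) * u12) ∧
        chiUm p ψ D
          !![u11, -β₀ * u11 + u12;
             -β₀ * u11 + u12,
             β₀ ^ 2 * u11 - (β₀ + γ₁ * γ₂⁻¹) * u12 + u22] = 1) := by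
  intro u₁₁ u₁₂ u₂₂
  have hp : (1 : ℝ) < p := Nat.one_lt_cast.mpr (Fact.out : p.Prime).one_lt
  have hmono {m n : ℤ} (h : m ≤ n) : (p : ℝ) ^ m ≤ (p : ℝ) ^ n := zpow_le_zpow_right₀ hp.le h
  have hpb : (p : ℝ) ^ (-(b : ℤ)) < 1 := zpow_lt_one_of_neg₀ hp (by omega)
  have hβD : ‖β₀ ^ 2 - D‖ ≤ (p : ℝ) ^ (-(b : ℤ)) := hcong1.trans (hmono (by omega))
  have hβγ : ‖β₀ * (γ₁ * γ₂⁻¹) + D‖ ≤ (p : ℝ) ^ (-(b : ℤ)) := by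
    rwa [min_eq_right (by omega)] at hcong3
  have hγ : ‖γ₁ * γ₂⁻¹‖ ≤ 1 := by simp [hγ₁, hγ₂]
  have hγβ : ‖γ₁ * γ₂⁻¹ - β₀‖ = 1 := by
    rw [norm_sub_rev]
    exact norm_sub_eq_one_of_norm_sq_sub_lt_of_norm_mul_add_lt (Padic.norm_two_eq_one hp2) hD hβ₀
      (hβD.trans_lt hpb) (hβγ.trans_lt hpb)
  have hmem : memUm p a b b ((p : ℚ_[p]) ^ b * β₀) γ₁ γ₂ (uParam β₀ (γ₁ * γ₂⁻¹) u₁₁ u₁₂ u₂₂) ↔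
      ‖u₁₁‖ ≤ (p : ℝ) ^ ((a : ℤ) - b) ∧ ‖u₁₂‖ ≤ (p : ℝ) ^ (b : ℤ) ∧ ‖u₂₂‖ ≤ 1 :=
    (memUm_uParam_iff hγ₂).trans <| norm_bounds_iff_of_norm_sub_eq_one hβ₀.le hγ hγβ
      (one_le_zpow₀ hp.le (by omega)) (hmono (by omega)) (hmono (by omega))
  refine ⟨hmem, fun hu => ?_⟩
  obtain ⟨h₁₁, h₁₂, h₂₂⟩ := hmem.mp hu
  have hχ : chiUm p ψ D (uParam β₀ (γ₁ * γ₂⁻¹) u₁₁ u₁₂ u₂₂) = _ :=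
    chiUm_uParam ψ hψ ((hψtriv u₂₂).mpr h₂₂)
  refine ⟨hχ, hχ.trans ((hψtriv _).mpr ?_)⟩
  have hβ₀γ : ‖-(β₀ + γ₁ * γ₂⁻¹)‖ ≤ (p : ℝ) ^ (-(b : ℤ)) := by
    rw [norm_neg]; exact norm_add_le_of_norm_sq_sub_le_of_norm_mul_add_le hβ₀ hβD hβγ
  rw [sub_eq_add_neg, ← neg_mul]
  exact (norm_add_le_max _ _).trans (max_le (Padic.norm_mul_le_one_of_le_zpow hcong1 h₁₁)
    (Padic.norm_mul_le_one_of_le_zpow hβ₀γ h₁₂))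

theorem stmt19 {p : ℕ} [Fact p.Prime] (hp2 : p ≠ 2) (a b : ℕ)
    (β₀ γ₁ γ₂ D : ℚ_[p]) (ψ : ℚ_[p] → ℂ)
    (hψ : ∀ x y, ψ (x + y) = ψ x * ψ y) (hψtriv : ∀ x, ψ x = 1 ↔ ‖x‖ ≤ 1)
    (hD : ‖D‖ = 1) (hb : 1 ≤ b) (hba : b < a) (hab : b ≤ a - b)
    (hβ₀ : ‖β₀‖ = 1) (hγ₁ : ‖γ₁‖ = 1) (hγ₂ : ‖γ₂‖ = 1)
    (hcong1 : ‖β₀ ^ 2 - D‖ ≤ (p : ℝ) ^ (-((a : ℤ) - (b : ℤ))))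
    (hcong2 : ‖(γ₁ * γ₂⁻¹) ^ 2 - D‖ ≤ (p : ℝ) ^ (-(b : ℤ)))
    (hcong3 : ‖β₀ * (γ₁ * γ₂⁻¹) + D‖ ≤ (p : ℝ) ^ (-(min (a - b) b : ℤ))) :
    ∀ u11 u12 u22 : ℚ_[p],
      (memUm p a b b ((p : ℚ_[p]) ^ b * β₀) γ₁ γ₂
        !![u11, -β₀ * u11 + u12;
           -β₀ * u11 + u12,
           β₀ ^ 2 * u11 - (β₀ + γ₁ * γ₂⁻¹) * u12 + u22] ↔
        (‖u11‖ ≤ (p : ℝ) ^ ((a : ℤ) - (b : ℤ)) ∧ ‖u12‖ ≤ (p : ℝ) ^ (b : ℤ) ∧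
          ‖u22‖ ≤ 1)) ∧
      (memUm p a b b ((p : ℚ_[p]) ^ b * β₀) γ₁ γ₂
        !![u11, -β₀ * u11 + u12;
           -β₀ * u11 + u12,
           β₀ ^ 2 * u11 - (β₀ + γ₁ * γ₂⁻¹) * u12 + u22] →
        chiUm p ψ D
          !![u11, -β₀ * u11 + u12;
             -β₀ * u11 + u12,
             β₀ ^ 2 * u11 - (β₀ + γ₁ * γ₂⁻¹) * u12 + u22]
          = ψ ((β₀ ^ 2 - D) * u11 - (β₀ + γ₁ * γ₂⁻¹) * u12) ∧
        chiUm p ψ D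
          !![u11, -β₀ * u11 + u12;
             -β₀ * u11 + u12,
             β₀ ^ 2 * u11 - (β₀ + γ₁ * γ₂⁻¹) * u12 + u22] = 1) :=
  stmt19_general hp2 a b β₀ γ₁ γ₂ D ψ hψ hψtriv hD hb hab hβ₀ hγ₁ hγ₂ hcong1 hcong3
end
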